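/- arXiv:2308.10106 — 9 statements merged into one kernel-verified Lean document; each statement's English description precedes it below -/
import Mathlib

section
/- Let A ⊆ ℝ^d be a finite set, k ∈ {1,…,d}, and set h(k,d) = max{d+1, 2(k+1)}. If for every subset B ⊆ A with |B| ≤ h(k,d) the lineality space of pos B has dimension at most k, then the lineality space of pos A has dimension at most k. -/
open scoped RealInnerProductSpace

/-- The conical hull (set of nonnegative combinations) of a set `V` in `ℝ^d`. -/
def posHull {d : ℕ} (V : Set (EuclideanSpace ℝ (Fin d))) : Set (EuclideanSpace ℝ (Fin d)) :=
  {x | ∃ (s : Finset (EuclideanSpace ℝ (Fin d))) (c : EuclideanSpace ℝ (Fin d) → ℝ),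
    ↑s ⊆ V ∧ (∀ v ∈ s, 0 ≤ c v) ∧ x = ∑ v ∈ s, c v • v}

/-- The lineality set `pos A ∩ (− pos A)` of the conical hull of `A`. -/
def linealitySet {d : ℕ} (A : Set (EuclideanSpace ℝ (Fin d))) : Set (EuclideanSpace ℝ (Fin d)) :=
  posHull A ∩ (-posHull A)

/-- `S` contains a `k`-dimensional cone (with some apex `u`). -/
def ContainsConeDim {d : ℕ} (k : ℕ) (S : Set (EuclideanSpace ℝ (Fin d))) : Prop :=
  ∃ (u : EuclideanSpace ℝ (Fin d)) (V : Set (EuclideanSpace ℝ (Fin d))),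
    Module.finrank ℝ (Submodule.span ℝ V) = k ∧ (fun x => u + x) '' posHull V ⊆ S

/-!
Let `L` be the lineality space of `pos A`. Since `L` is a face of `pos A`, the generators lying in
`L` form a set `S` with `pos S = span S = L`, i.e. `S` has a linear dependence with all coefficients
positive. It suffices to find `T ⊆ S` with `|T| ≤ max (dim L + 1) (2 m)` such that `pos T = span T`
has dimension at least `m = k + 1`, because then `span T ⊆ lpos T`.

This goes by induction on `r = dim span S`. A minimal positively dependent `C ⊆ S` has
`|C| ≤ dim span C + 1`. If `dim span C < m`, apply induction to the image of `S` modulo `span C`,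
and lift the result back, adding `C`. The count then overshoots only if `|T| = dim span T + 2`. In
that case the dependences of `T` form a plane containing a positive one, and its two boundary rays
give two positively dependent proper subsets covering `T`. One of these has dimension at least `m`
and at most `dim + 1` elements.
-/

open Module Submodule Finset PointedCone

namespace PointedCone

variable {R M : Type*} [Semiring R] [PartialOrder R] [IsOrderedRing R] [AddCommGroup M]
  [Module R M]

theorem IsFaceOf.eq_hull_inter {F : PointedCone R M} {s : Set M} (hF : F.IsFaceOf (hull R s)) :
    F = hull R (s ∩ F) := by
  classical
  refine le_antisymm (fun x hx => ?_) (span_le.mpr Set.inter_subset_right)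
  obtain ⟨c, hcs, hc, rfl⟩ := mem_hull_set.mp (hF.le hx)
  refine sum_mem fun y hy => smul_mem _ (hc y) (subset_hull ⟨hcs hy, ?_⟩)
  have hrest : ∑ z ∈ c.support.erase y, c z • z ∈ hull R s :=
    sum_mem fun z hz => smul_mem _ (hc z) (subset_hull (hcs (mem_of_mem_erase hz)))
  refine hF.mem_of_smul_add_mem (subset_hull (hcs hy)) hrest
    ((hc y).lt_of_ne (Ne.symm (Finsupp.mem_support_iff.mp hy))) ?_
  rwa [Finsupp.sum, ← add_sum_erase _ _ hy] at hx

end PointedCone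

section

variable {𝕜 E F : Type*} [DivisionRing 𝕜] [AddCommGroup E] [Module 𝕜 E] [AddCommGroup F]
  [Module 𝕜 F]

theorem finrank_map_add_finrank_ker {f : E →ₗ[𝕜] F} {V : Submodule 𝕜 E} [Module.Finite 𝕜 V]
    (hker : LinearMap.ker f ≤ V) :
    finrank 𝕜 (V.map f) + finrank 𝕜 (LinearMap.ker f) = finrank 𝕜 V := by
  rw [← (f.domRestrict V).finrank_range_add_finrank_ker, LinearMap.range_domRestrict,
    LinearMap.ker_domRestrict, (comapSubtypeEquivOfLe hker).finrank_eq]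

theorem finrank_image_add_finrank_ker [DecidableEq F] {f : E →ₗ[𝕜] F} {S : Finset E}
    (hker : LinearMap.ker f ≤ span 𝕜 (S : Set E)) :
    (↑(S.image f) : Set F).finrank 𝕜 + finrank 𝕜 (LinearMap.ker f) = (S : Set E).finrank 𝕜 := by
  rw [Set.finrank, coe_image, ← map_span, finrank_map_add_finrank_ker hker, Set.finrank]

theorem exists_sum_smul_eq_zero_of_finrank_add_two_le {T : Finset E}
    (hcard : (T : Set E).finrank 𝕜 + 2 ≤ #T) :
    ∃ t₀ ∈ T, ∃ η : E → 𝕜, ∑ v ∈ T, η v • v = 0 ∧ η t₀ = 0 ∧ ∃ v ∈ T, η v ≠ 0 := by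
  classical
  obtain ⟨t₀, ht₀⟩ : T.Nonempty := card_pos.mp (by omega)
  have hdep : ¬ LinearIndepOn 𝕜 id (↑(T.erase t₀) : Set E) := fun hli => by
    have hrank := finrank_span_finset_eq_card hli
    have hmono := finrank_mono (span_mono (coe_subset.mpr (erase_subset t₀ T))) (R := 𝕜)
    rw [card_erase_of_mem ht₀] at hrank
    unfold Set.finrank at hcard
    omega
  obtain ⟨η, hηsum, v, hv, hηv⟩ := not_linearIndepOn_finset_iff.mp hdep
  refine ⟨t₀, ht₀, Function.update η t₀ 0, ?_, Function.update_self .., v, mem_of_mem_erase hv,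
    by rwa [Function.update_of_ne (ne_of_mem_erase hv)]⟩
  rw [← add_sum_erase _ _ ht₀, Function.update_self, zero_smul, zero_add, ← hηsum]
  exact sum_congr rfl fun w hw => by rw [Function.update_of_ne (ne_of_mem_erase hw), id]

end

section

variable {𝕜 E : Type*} [Field 𝕜] [LinearOrder 𝕜] [AddCommGroup E] [Module 𝕜 E]

variable (𝕜) in
def PosDependent (s : Finset E) : Prop :=
  ∃ c : E → 𝕜, (∀ v ∈ s, 0 < c v) ∧ ∑ v ∈ s, c v • v = 0

theorem posDependent_filter_ne_zero {s : Finset E} {θ : E → 𝕜} (hθ : ∀ v ∈ s, 0 ≤ θ v)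
    (hsum : ∑ v ∈ s, θ v • v = 0) : PosDependent 𝕜 (s.filter (θ · ≠ 0)) :=
  ⟨θ, fun v hv => (hθ v (mem_filter.mp hv).1).lt_of_ne' (mem_filter.mp hv).2, by
    rwa [sum_filter_of_ne fun v _ => left_ne_zero_of_smul]⟩

namespace PosDependent

variable {s C T : Finset E}

theorem mem_span_erase [DecidableEq E] (h : PosDependent 𝕜 s) {t : E} (ht : t ∈ s) :
    t ∈ span 𝕜 (↑(s.erase t) : Set E) := by
  obtain ⟨c, hc, hsum⟩ := h
  rw [← add_sum_erase _ _ ht] at hsum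
  have ht_eq : t = -(c t)⁻¹ • ∑ v ∈ s.erase t, c v • v := by
    rw [eq_neg_of_add_eq_zero_right hsum, neg_smul, smul_neg, neg_neg, smul_smul,
      inv_mul_cancel₀ (hc t ht).ne', one_smul]
  have hmem : -(c t)⁻¹ • ∑ v ∈ s.erase t, c v • v ∈ span 𝕜 (↑(s.erase t) : Set E) :=
    smul_mem _ _ (sum_mem fun v hv => smul_mem _ _ (Submodule.subset_span hv))
  rwa [← ht_eq] at hmem

theorem finrank_add_card_lt [DecidableEq E] (hT : PosDependent 𝕜 T) (hCT : C ⊂ T) :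
    (T : Set E).finrank 𝕜 + #C < (C : Set E).finrank 𝕜 + #T := by
  obtain ⟨t, htT, htC⟩ := exists_of_ssubset hCT
  have hspan : span 𝕜 (T : Set E) ≤ span 𝕜 ↑C ⊔ span 𝕜 ↑((T \ C).erase t) := by
    conv_lhs => rw [← insert_erase htT, coe_insert, span_insert_eq_span (hT.mem_span_erase htT)]
    rw [← span_union, ← coe_union]
    refine span_mono (coe_subset.mpr fun v hv => ?_)
    by_cases hvC : v ∈ C
    · exact mem_union_left _ hvC
    · exact mem_union_right _
        (mem_erase.mpr ⟨ne_of_mem_erase hv, mem_sdiff.mpr ⟨mem_of_mem_erase hv, hvC⟩⟩)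
  have hrank := (finrank_mono hspan).trans (finrank_add_le_finrank_add_finrank _ _)
  have hcard := finrank_span_finset_le_card (R := 𝕜) ((T \ C).erase t)
  rw [card_erase_of_mem (mem_sdiff.mpr ⟨htT, htC⟩), card_sdiff_of_subset hCT.subset] at hcard
  have := card_lt_card hCT
  unfold Set.finrank at hcard ⊢
  omega

end PosDependent

end

section

variable {𝕜 E F : Type*} [Field 𝕜] [LinearOrder 𝕜] [IsStrictOrderedRing 𝕜]
  [AddCommGroup E] [Module 𝕜 E] [AddCommGroup F] [Module 𝕜 F]

theorem posDependent_iff_neg_mem_hull {s : Finset E} :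
    PosDependent 𝕜 s ↔ ∀ v ∈ s, -v ∈ hull 𝕜 (s : Set E) := by
  classical
  constructor
  · rintro ⟨c, hc, hsum⟩ v hv
    have hmul : -(c v • v) ∈ hull 𝕜 (s : Set E) := by
      rw [← add_sum_erase _ _ hv, add_comm] at hsum
      rw [← eq_neg_of_add_eq_zero_left hsum]
      exact sum_mem fun w hw => smul_mem _ (hc w (mem_of_mem_erase hw)).le
        (subset_hull (mem_of_mem_erase hw))
    simpa [smul_smul, inv_mul_cancel₀ (hc v hv).ne'] using
      smul_mem _ (inv_nonneg.mpr (hc v hv).le) hmul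
  · intro h
    have : -∑ v ∈ s, v ∈ hull 𝕜 (s : Set E) := by
      rw [← sum_neg_distrib]; exact sum_mem h
    obtain ⟨b, -, hb⟩ := mem_span_finset.mp this
    refine ⟨fun v => 1 + (b v : 𝕜), fun v _ => add_pos_of_pos_of_nonneg one_pos (b v).2, ?_⟩
    simp only [add_smul, one_smul, sum_add_distrib, Nonneg.coe_smul, hb, add_neg_cancel]

namespace PosDependent

variable {s C S T : Finset E}

theorem span_le_lineal (h : PosDependent 𝕜 s) :
    span 𝕜 (s : Set E) ≤ (hull 𝕜 (s : Set E)).lineal :=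
  span_le.mpr fun v hv => mem_lineal.mpr ⟨subset_hull hv, posDependent_iff_neg_mem_hull.mp h v hv⟩

theorem mem_hull_of_mem_span (h : PosDependent 𝕜 s) {x : E} (hx : x ∈ span 𝕜 (s : Set E)) :
    x ∈ hull 𝕜 (s : Set E) :=
  lineal_le _ (h.span_le_lineal hx)

theorem erase_zero [DecidableEq E] (h : PosDependent 𝕜 s) : PosDependent 𝕜 (s.erase 0) := by
  refine posDependent_iff_neg_mem_hull.mpr fun v hv => ?_
  rw [coe_erase, PointedCone.hull, span_sdiff_singleton_zero]
  exact posDependent_iff_neg_mem_hull.mp h v (mem_of_mem_erase hv)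

theorem image [DecidableEq F] (h : PosDependent 𝕜 s) (f : E →ₗ[𝕜] F) :
    PosDependent 𝕜 (s.image f) := by
  refine posDependent_iff_neg_mem_hull.mpr fun w hw => ?_
  obtain ⟨v, hv, rfl⟩ := mem_image.mp hw
  rw [coe_image, ← map_neg]
  exact apply_mem_span_image_of_mem_span (f.restrictScalars _)
    (posDependent_iff_neg_mem_hull.mp h v hv)

theorem union_of_image [DecidableEq E] [DecidableEq F] (f : E →ₗ[𝕜] F) (hC : PosDependent 𝕜 C)
    (hker : LinearMap.ker f ≤ span 𝕜 (C : Set E)) (hT : PosDependent 𝕜 (T.image f)) :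
    PosDependent 𝕜 (C ∪ T) := by
  refine posDependent_iff_neg_mem_hull.mpr fun v hv => ?_
  have hCle : hull 𝕜 (C : Set E) ≤ hull 𝕜 ↑(C ∪ T) := span_mono (by simp)
  rcases mem_union.mp hv with hvC | hvT
  · exact hCle (posDependent_iff_neg_mem_hull.mp hC v hvC)
  have himg :
      -f v ∈ Submodule.map (f.restrictScalars {c : 𝕜 // 0 ≤ c}) (hull 𝕜 (T : Set E)) := by
    rw [Submodule.map_span]
    simpa using posDependent_iff_neg_mem_hull.mp hT (f v) (mem_image_of_mem f hvT)
  obtain ⟨x, hx, hfx⟩ := Submodule.mem_map.mp himg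
  have hker' : -v - x ∈ hull 𝕜 (C : Set E) :=
    hC.mem_hull_of_mem_span (hker (by simpa [sub_eq_zero] using hfx.symm))
  rw [← sub_add_cancel (-v) x]
  exact add_mem (hCle hker') (span_mono (by simp) hx)

theorem exists_cover [DecidableEq E] (hT : PosDependent 𝕜 T)
    (hcard : (T : Set E).finrank 𝕜 + 2 ≤ #T) :
    ∃ C₁ C₂, C₁ ⊂ T ∧ C₂ ⊂ T ∧ T ⊆ C₁ ∪ C₂ ∧ PosDependent 𝕜 C₁ ∧ PosDependent 𝕜 C₂ := by
  obtain ⟨δ, hδ, hδsum⟩ := hT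
  obtain ⟨t₀, ht₀, η, hηsum, hηt₀, v₁, hv₁, hηv₁⟩ :=
    exists_sum_smul_eq_zero_of_finrank_add_two_le hcard
  set r : E → 𝕜 := fun v => η v / δ v
  have hr : ∀ v ∈ T, η v = r v * δ v := fun v hv => (div_mul_cancel₀ _ (hδ v hv).ne').symm
  obtain ⟨t₁, ht₁, hmin⟩ := exists_min_image T r ⟨t₀, ht₀⟩
  obtain ⟨t₂, ht₂, hmax⟩ := exists_max_image T r ⟨t₀, ht₀⟩
  have hlt : r t₁ < r t₂ := by
    have hne : r v₁ ≠ r t₀ := by simp [r, hηt₀, hηv₁, (hδ v₁ hv₁).ne']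
    rcases hne.lt_or_gt with h | h
    · exact (hmin v₁ hv₁).trans_lt (h.trans_le (hmax t₀ ht₀))
    · exact (hmin t₀ ht₀).trans_lt (h.trans_le (hmax v₁ hv₁))
  set θ₁ : E → 𝕜 := fun v => η v - r t₁ * δ v
  set θ₂ : E → 𝕜 := fun v => r t₂ * δ v - η v
  have hθ₁ : ∀ v ∈ T, θ₁ v = (r v - r t₁) * δ v := fun v hv => by simp only [θ₁, hr v hv]; ring
  have hθ₂ : ∀ v ∈ T, θ₂ v = (r t₂ - r v) * δ v := fun v hv => by simp only [θ₂, hr v hv]; ring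
  have hsum₁ : ∑ v ∈ T, θ₁ v • v = 0 := by
    simp only [θ₁, sub_smul, sum_sub_distrib, mul_smul, ← smul_sum, hηsum, hδsum, smul_zero,
      sub_zero]
  have hsum₂ : ∑ v ∈ T, θ₂ v • v = 0 := by
    simp only [θ₂, sub_smul, sum_sub_distrib, mul_smul, ← smul_sum, hηsum, hδsum, smul_zero,
      sub_zero]
  refine ⟨T.filter (θ₁ · ≠ 0), T.filter (θ₂ · ≠ 0),
    filter_ssubset.mpr ⟨t₁, ht₁, by simp [hθ₁ t₁ ht₁]⟩,
    filter_ssubset.mpr ⟨t₂, ht₂, by simp [hθ₂ t₂ ht₂]⟩, fun v hv => ?_,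
    posDependent_filter_ne_zero (fun v hv => ?_) hsum₁,
    posDependent_filter_ne_zero (fun v hv => ?_) hsum₂⟩
  · have hpos : 0 < θ₁ v + θ₂ v := by
      rw [hθ₁ v hv, hθ₂ v hv, ← add_mul]
      exact mul_pos (by linarith) (hδ v hv)
    by_contra hvC
    simp only [mem_union, mem_filter, not_or, not_and, not_not] at hvC
    linarith [(hvC.1 hv), (hvC.2 hv)]
  · rw [hθ₁ v hv]; exact mul_nonneg (sub_nonneg.mpr (hmin v hv)) (hδ v hv).le
  · rw [hθ₂ v hv]; exact mul_nonneg (sub_nonneg.mpr (hmax v hv)) (hδ v hv).le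

theorem exists_subset_card_le_finrank_add_one (hS : PosDependent 𝕜 S) (hne : S.Nonempty) :
    ∃ C ⊆ S, C.Nonempty ∧ PosDependent 𝕜 C ∧ #C ≤ (C : Set E).finrank 𝕜 + 1 := by
  classical
  induction S using Finset.strongInduction with
  | H S ih =>
  by_cases hsmall : #S ≤ (S : Set E).finrank 𝕜 + 1
  · exact ⟨S, subset_rfl, hne, hS, hsmall⟩
  obtain ⟨C₁, C₂, h₁, h₂, hcover, hC₁, -⟩ := hS.exists_cover (by omega)
  have hne₁ : C₁.Nonempty := by
    rw [nonempty_iff_ne_empty]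
    rintro rfl
    exact h₂.not_subset (by simpa using hcover)
  obtain ⟨C, hCC₁, hCne, hC, hCcard⟩ := ih C₁ h₁ hC₁ hne₁
  exact ⟨C, hCC₁.trans h₁.subset, hCne, hC, hCcard⟩

theorem exists_subset_of_card_eq_finrank_add_two (hT : PosDependent 𝕜 T)
    (hcard : #T = (T : Set E).finrank 𝕜 + 2) {m : ℕ} (hm : 2 * m ≤ (T : Set E).finrank 𝕜 + 1) :
    ∃ T₀ ⊆ T, #T₀ ≤ (T : Set E).finrank 𝕜 + 1 ∧ PosDependent 𝕜 T₀ ∧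
      m ≤ (T₀ : Set E).finrank 𝕜 := by
  classical
  obtain ⟨C₁, C₂, h₁, h₂, hcover, hC₁, hC₂⟩ := hT.exists_cover hcard.ge
  have hnull₁ := hT.finrank_add_card_lt h₁
  have hnull₂ := hT.finrank_add_card_lt h₂
  have hrank₁ := finrank_mono (span_mono (coe_subset.mpr h₁.subset)) (R := 𝕜)
  have hrank₂ := finrank_mono (span_mono (coe_subset.mpr h₂.subset)) (R := 𝕜)
  have hcard₁₂ := (card_le_card hcover).trans (card_union_le C₁ C₂)
  unfold Set.finrank at *
  by_cases hm₁ : m ≤ finrank 𝕜 (span 𝕜 (C₁ : Set E))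
  · exact ⟨C₁, h₁.subset, by omega, hC₁, hm₁⟩
  · exact ⟨C₂, h₂.subset, by omega, hC₂, by omega⟩

theorem exists_lift (hC : PosDependent 𝕜 C) (hCS : C ⊆ S) {f : E →ₗ[𝕜] F}
    (hker : LinearMap.ker f = span 𝕜 (C : Set E)) {T' : Finset F} (hT'S : (T' : Set F) ⊆ f '' S)
    (hT' : PosDependent 𝕜 T') :
    ∃ T ⊆ S, #T ≤ #C + #T' ∧ PosDependent 𝕜 T ∧
      (C : Set E).finrank 𝕜 + (T' : Set F).finrank 𝕜 ≤ (T : Set E).finrank 𝕜 := by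
  classical
  choose! g hgS hg using fun q (hq : q ∈ T') => hT'S hq
  have himage : (T'.image g).image f = T' := by
    rw [image_image]
    exact (image_congr fun q hq => hg q hq).trans image_id
  refine ⟨C ∪ T'.image g, union_subset hCS fun v hv => ?_, ?_, ?_, ?_⟩
  · obtain ⟨q, hq, rfl⟩ := mem_image.mp hv
    exact hgS q hq
  · exact (card_union_le _ _).trans (Nat.add_le_add_left card_image_le _)
  · exact hC.union_of_image f hker.le (by rwa [himage])
  · have hle : LinearMap.ker f ≤ span 𝕜 ↑(C ∪ T'.image g) := hker ▸ span_mono (by simp)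
    have hsub : T' ⊆ (C ∪ T'.image g).image f := by
      conv_lhs => rw [← himage]
      exact image_subset_image subset_union_right
    rw [← finrank_image_add_finrank_ker hle, hker, add_comm]
    exact Nat.add_le_add_right (finrank_mono (span_mono (R := 𝕜) (coe_subset.mpr hsub))) _

theorem exists_subset_card_le_max (hS : PosDependent 𝕜 S) {m : ℕ}
    (hm : m ≤ (S : Set E).finrank 𝕜) :
    ∃ T ⊆ S, #T ≤ max ((S : Set E).finrank 𝕜 + 1) (2 * m) ∧ PosDependent 𝕜 T ∧
      m ≤ (T : Set E).finrank 𝕜 := by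
  classical
  induction hr : (S : Set E).finrank 𝕜 using Nat.strong_induction_on generalizing E S m with
  | _ r ih =>
  by_cases hsmall : #S ≤ max (r + 1) (2 * m)
  · exact ⟨S, subset_rfl, hsmall, hS, hr ▸ hm⟩
  obtain ⟨C, hCS, ⟨c, hc⟩, hC, hCcard⟩ :=
    hS.erase_zero.exists_subset_card_le_finrank_add_one (card_pos.mp (by
      have := pred_card_le_card_erase (a := (0 : E)) (s := S); omega))
  set W := span 𝕜 (C : Set E)
  have hCW : (C : Set E).finrank 𝕜 = finrank 𝕜 W := rfl
  have hw : 1 ≤ finrank 𝕜 W := one_le_finrank_iff.mpr fun hW => ne_of_mem_erase (hCS hc)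
    ((Submodule.eq_bot_iff _).mp hW c (Submodule.subset_span hc))
  have hCS' : C ⊆ S := hCS.trans (erase_subset 0 S)
  have hWS : W ≤ span 𝕜 (S : Set E) := span_mono (coe_subset.mpr hCS')
  have hwr : finrank 𝕜 W ≤ r := hr ▸ finrank_mono hWS
  by_cases hwm : m ≤ finrank 𝕜 W
  · exact ⟨C, hCS', by omega, hC, hwm⟩
  have hQ := finrank_image_add_finrank_ker (f := W.mkQ) (S := S) (by rwa [ker_mkQ])
  rw [ker_mkQ, hr] at hQ
  obtain ⟨T', hT'Q, hT'card, hT', hT'm⟩ :=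
    ih _ (by omega) (hS.image W.mkQ) (show m - finrank 𝕜 W ≤ _ by omega) rfl
  obtain ⟨T, hTS, hTcard, hT, hTm⟩ :=
    hC.exists_lift hCS' (ker_mkQ W) (by simpa using coe_subset.mpr hT'Q) hT'
  have hTr : (T : Set E).finrank 𝕜 ≤ r := hr ▸ finrank_mono (span_mono (coe_subset.mpr hTS))
  by_cases hTsmall : #T ≤ max (r + 1) (2 * m)
  · exact ⟨T, hTS, hTsmall, hT, by omega⟩
  -- `#T ≤ #C + #T' ≤ max (r + 2) (2 * m - dim W + 1)` and `dim W ≥ 1`,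
  -- so here `#T = r + 2 > 2 * m`.
  rcases hTr.lt_or_eq with hlt | heq
  · obtain ⟨T₀, hT₀T, hT₀card, hT₀, hT₀m⟩ := ih _ hlt hT (show m ≤ _ by omega) rfl
    exact ⟨T₀, hT₀T.trans hTS, hT₀card.trans (max_le_max (by omega) le_rfl), hT₀, hT₀m⟩
  · obtain ⟨T₀, hT₀T, hT₀card, hT₀, hT₀m⟩ :=
      hT.exists_subset_of_card_eq_finrank_add_two (m := m) (by omega) (by omega)
    exact ⟨T₀, hT₀T.trans hTS, by omega, hT₀, hT₀m⟩

end PosDependent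

theorem exists_posDependent_lineal_eq_span (A : Finset E) :
    ∃ S ⊆ A, PosDependent 𝕜 S ∧ (hull 𝕜 (A : Set E)).lineal = span 𝕜 (S : Set E) := by
  classical
  set L := (hull 𝕜 (A : Set E)).lineal
  have hL : (L : PointedCone 𝕜 E) = hull 𝕜 ↑(A.filter (· ∈ L)) := by
    rw [coe_filter]
    exact (IsFaceOf.lineal _).eq_hull_inter
  refine ⟨A.filter (· ∈ L), filter_subset _ _,
    posDependent_iff_neg_mem_hull.mpr fun v hv => ?_,
    le_antisymm (fun x hx => hull_le_span 𝕜 _ (hL ▸ hx))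
      (span_le.mpr fun v hv => (mem_filter.mp hv).2)⟩
  rw [← hL]
  exact mem_ofSubmodule_iff.mpr (neg_mem (mem_filter.mp hv).2)

end

theorem posHull_eq_hull {d : ℕ} (V : Set (EuclideanSpace ℝ (Fin d))) : posHull V = hull ℝ V := by
  ext x
  constructor
  · rintro ⟨s, c, hs, hc, rfl⟩
    exact sum_mem fun v hv => smul_mem _ (hc v hv) (subset_hull (hs hv))
  · intro hx
    obtain ⟨c, hcV, hc, hsum⟩ := mem_hull_set.mp hx
    exact ⟨c.support, c, hcV, fun v _ => hc v, hsum.symm⟩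

theorem span_linealitySet {d : ℕ} (A : Set (EuclideanSpace ℝ (Fin d))) :
    span ℝ (linealitySet A) = (hull ℝ A).lineal := by
  have : linealitySet A = (hull ℝ A).lineal := by
    ext x
    simp [linealitySet, posHull_eq_hull]
  rw [this, span_eq]

theorem lineality_helly_general (d k : ℕ)
    (A : Finset (EuclideanSpace ℝ (Fin d)))
    (H : ∀ B ⊆ A, B.card ≤ max (d + 1) (2 * (k + 1)) →
      Module.finrank ℝ (Submodule.span ℝ (linealitySet (B : Set (EuclideanSpace ℝ (Fin d))))) ≤ k) :
    Module.finrank ℝ (Submodule.span ℝ (linealitySet (A : Set (EuclideanSpace ℝ (Fin d))))) ≤ k := by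
  rw [span_linealitySet]
  by_contra! hk
  obtain ⟨S, hSA, hS, hL⟩ := exists_posDependent_lineal_eq_span (𝕜 := ℝ) A
  rw [hL] at hk
  obtain ⟨T, hTS, hTcard, hT, hTk⟩ := hS.exists_subset_card_le_max (m := k + 1) hk
  have hSd : (S : Set (EuclideanSpace ℝ (Fin d))).finrank ℝ ≤ d :=
    (Submodule.finrank_le _).trans_eq finrank_euclideanSpace_fin
  have hTH := H T (hTS.trans hSA) (hTcard.trans (max_le_max (by omega) le_rfl))
  rw [span_linealitySet] at hTH
  have := hTk.trans (finrank_mono hT.span_le_lineal)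
  omega

/-- Helly-type theorem for the dimension of lineality spaces of conical hulls,
with bound `h(k,d) = max {d+1, 2(k+1)}`. -/
theorem lineality_helly (d k : ℕ) (hk1 : 1 ≤ k) (hkd : k ≤ d)
    (A : Finset (EuclideanSpace ℝ (Fin d)))
    (H : ∀ B ⊆ A, B.card ≤ max (d + 1) (2 * (k + 1)) →
      Module.finrank ℝ (Submodule.span ℝ (linealitySet (B : Set (EuclideanSpace ℝ (Fin d))))) ≤ k) :
    Module.finrank ℝ (Submodule.span ℝ (linealitySet (A : Set (EuclideanSpace ℝ (Fin d))))) ≤ k :=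
  lineality_helly_general d k A H
end

section
/- Let A be a finite set of nonzero vectors in ℝ^d and k ∈ {1,…,d}, m(k,d) = max{d+1, 2(d−k+1)}. The system of inequalities a·x ≤ 0 for all a ∈ A has at least k linearly independent solutions if and only if for every subset B ⊆ A with |B| ≤ m(k,d) the system a·x ≤ 0 for all a ∈ B has at least k linearly independent solutions. -/
/-!
Let `C` be the solution cone of `A`. If `span C` has dimension `< k`, Farkas' lemma puts
`W = (span C)ᗮ`, of dimension `≥ s = d - k + 1`, inside the conic hull of `A`. It suffices to find
`B ⊆ A`, `|B| ≤ max (d + 1) (2 s)`, with a strictly positive linear relation and `dim span B ≥ s`: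
then `span B` lies in the conic hull of `B`, so every solution of `B` is orthogonal to `span B` and
the solutions of `B` span at most `k - 1` dimensions.

Such a `B` is built by induction on `s`. A nonzero `v ∈ W` and `-v` give a positive relation on
`A`, hence a positive circuit `A₀ ⊆ A`, whose span `U` has dimension `t = |A₀| - 1`. If `t ≥ s`,
take `B = A₀`. Otherwise pass to `E ⧸ U`, find `B'` for `s - t` there, and lift it to `B₀ ⊆ A`;
the positive relation of `B'` lifts to one of `B₀` up to a vector `w ∈ U`, which is cancelled
either by all of `A₀` or, to save an element, by an independent part of `A₀`.
-/

open scoped NNReal RealInnerProductSpace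
open Finset Module Submodule
open PointedCone (hull)

section LinearAlgebra

variable {K V V₂ : Type*} [DivisionRing K] [AddCommGroup V] [Module K V] [AddCommGroup V₂]
  [Module K V₂]

theorem Submodule.finrank_map_add_finrank_inf_ker (f : V →ₗ[K] V₂) (P : Submodule K V)
    [FiniteDimensional K P] :
    finrank K (P.map f) + finrank K (P ⊓ LinearMap.ker f : Submodule K V) = finrank K P := by
  have h := LinearMap.finrank_range_add_finrank_ker (f.domRestrict P)
  rwa [LinearMap.range_domRestrict, LinearMap.ker_domRestrict,
    (equivMapOfInjective _ P.injective_subtype _).finrank_eq, map_comap_subtype] at h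

theorem Submodule.finrank_le_finrank_map_mkQ_add (W U : Submodule K V) [FiniteDimensional K W]
    [FiniteDimensional K U] : finrank K W ≤ finrank K (W.map U.mkQ) + finrank K U := by
  have := W.finrank_map_add_finrank_inf_ker U.mkQ
  rw [ker_mkQ] at this
  have := finrank_mono (inf_le_right : W ⊓ U ≤ U)
  omega

theorem exists_linearIndependent_fin_of_le_finrank_span [FiniteDimensional K V] {s : Set V}
    {k : ℕ} (hk : k ≤ finrank K (span K s)) :
    ∃ x : Fin k → V, LinearIndependent K x ∧ ∀ i, x i ∈ s := by
  obtain ⟨t, hts, hspan, hli⟩ := exists_linearIndependent K s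
  have := hli.finite
  have := Fintype.ofFinite t
  rw [← hspan, finrank_span_set_eq_card hli, Set.toFinset_card, ← Fintype.card_fin k] at hk
  obtain ⟨f⟩ := Function.Embedding.nonempty_of_card_le hk
  exact ⟨fun i => f i, hli.comp f f.injective, fun i => hts (f i).2⟩

end LinearAlgebra

section PositiveCombination

variable {E : Type*} [AddCommGroup E] [Module ℝ E]

def IsPositiveCombination (S : Finset E) (v : E) : Prop :=
  ∃ c : E → ℝ, (∀ x ∈ S, 0 < c x) ∧ ∑ x ∈ S, c x • x = v

theorem mem_hull_finset_iff {X : Finset E} {v : E} :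
    v ∈ hull ℝ (X : Set E) ↔ ∃ c : E → ℝ, (∀ x ∈ X, 0 ≤ c x) ∧ ∑ x ∈ X, c x • x = v := by
  rw [PointedCone.hull, mem_span_finset]
  constructor
  · rintro ⟨f, -, rfl⟩
    exact ⟨fun x => f x, fun x _ => (f x).2, by simp⟩
  · rintro ⟨c, hc, rfl⟩
    classical
    refine ⟨fun x => if hx : x ∈ X then ⟨c x, hc x hx⟩ else 0, ?_, ?_⟩
    · exact Function.support_subset_iff'.2 fun x hx => dif_neg hx
    · exact sum_congr rfl fun x hx => by simp [hx]

theorem IsPositiveCombination.mem_hull {S : Finset E} {v : E} (h : IsPositiveCombination S v) :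
    v ∈ hull ℝ (S : Set E) :=
  let ⟨c, hc, hv⟩ := h
  mem_hull_finset_iff.2 ⟨c, fun x hx => (hc x hx).le, hv⟩

theorem isPositiveCombination_filter_pos {X : Finset E} {c : E → ℝ}
    (hc : ∀ x ∈ X, 0 ≤ c x) : IsPositiveCombination (X.filter (0 < c ·)) (∑ x ∈ X, c x • x) := by
  refine ⟨c, fun x hx => (mem_filter.1 hx).2, sum_filter_of_ne fun x hx hcx => ?_⟩
  exact (hc x hx).lt_of_ne' fun h => hcx (by rw [h, zero_smul])

theorem IsPositiveCombination.union [DecidableEq E] {S T : Finset E} {v w : E}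
    (hS : IsPositiveCombination S v) (hT : IsPositiveCombination T w) :
    IsPositiveCombination (S ∪ T) (v + w) := by
  obtain ⟨c, hc, rfl⟩ := hS
  obtain ⟨c', hc', rfl⟩ := hT
  refine ⟨fun x => (if x ∈ S then c x else 0) + if x ∈ T then c' x else 0, ?_, ?_⟩
  · intro x hx
    dsimp only
    split_ifs with hS hT hT
    · linarith [hc x hS, hc' x hT]
    · simpa using hc x hS
    · simpa using hc' x hT
    · simp_all
  · simp only [add_smul, sum_add_distrib, ite_smul, zero_smul, sum_ite_mem, union_inter_cancel_left,
      union_inter_cancel_right]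

theorem IsPositiveCombination.neg_mem_hull_erase [DecidableEq E] {S : Finset E} {x : E}
    (h : IsPositiveCombination S 0) (hx : x ∈ S) : -x ∈ hull ℝ (S.erase x : Set E) := by
  obtain ⟨c, hc, hsum⟩ := h
  have hcx := hc x hx
  have hsplit : c x • x + ∑ y ∈ S.erase x, c y • y = 0 := by
    rwa [add_sum_erase S (fun y => c y • y) hx]
  have : -x = ∑ y ∈ S.erase x, (c y / c x) • y := by
    simp only [div_eq_inv_mul, mul_smul, ← smul_sum]
    rw [eq_neg_of_add_eq_zero_right hsplit, smul_neg, smul_smul, inv_mul_cancel₀ hcx.ne', one_smul]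
  rw [this]
  exact mem_hull_finset_iff.2
    ⟨_, fun y hy => div_nonneg (hc y (mem_of_mem_erase hy)).le hcx.le, rfl⟩

theorem IsPositiveCombination.span_subset_hull {S : Finset E} (h : IsPositiveCombination S 0) :
    (span ℝ (S : Set E) : Set E) ⊆ hull ℝ (S : Set E) := by
  classical
  have hneg : ∀ x ∈ S, -x ∈ hull ℝ (S : Set E) := fun x hx =>
    span_mono (by simp) (h.neg_mem_hull_erase hx)
  intro v hv
  refine (span_induction (p := fun v _ => v ∈ hull ℝ (S : Set E) ∧ -v ∈ hull ℝ (S : Set E))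
    (fun x hx => ⟨subset_span hx, hneg x hx⟩) (by simp) (fun _ _ _ _ h₁ h₂ => ?_)
    (fun r _ _ h => ?_) hv).1
  · exact ⟨add_mem h₁.1 h₂.1, by rw [neg_add]; exact add_mem h₁.2 h₂.2⟩
  · rcases le_total 0 r with hr | hr
    · exact ⟨PointedCone.smul_mem _ hr h.1, by rw [← smul_neg]; exact PointedCone.smul_mem _ hr h.2⟩
    · refine ⟨?_, ?_⟩
      · rw [← neg_smul_neg]; exact PointedCone.smul_mem _ (neg_nonneg.2 hr) h.2
      · rw [← neg_smul]; exact PointedCone.smul_mem _ (neg_nonneg.2 hr) h.1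

theorem IsPositiveCombination.exists_ssubset {S : Finset E} {v : E}
    (h : IsPositiveCombination S v) {g : E → ℝ} (hg : ∑ x ∈ S, g x • x = 0)
    (hne : ∃ x ∈ S, g x ≠ 0) :
    ∃ T ⊂ S, (∀ x ∈ S, g x = 0 → x ∈ T) ∧ IsPositiveCombination T v := by
  classical
  obtain ⟨c, hc, rfl⟩ := h
  obtain ⟨x₀, hx₀, hmin⟩ := exists_min_image (S.filter (g · ≠ 0)) (fun x => c x / |g x|)
    (let ⟨x, hx, hgx⟩ := hne; ⟨x, mem_filter.2 ⟨hx, hgx⟩⟩)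
  obtain ⟨hx₀S, hgx₀⟩ := mem_filter.1 hx₀
  -- the largest step along `-g` keeping `c` nonnegative; it makes the coefficient of `x₀` vanish
  set t := c x₀ / g x₀
  have hnonneg : ∀ x ∈ S, 0 ≤ c x - t * g x := by
    intro x hx
    rcases eq_or_ne (g x) 0 with hgx | hgx
    · simpa [hgx] using (hc x hx).le
    have ht : |t| ≤ c x / |g x| := by
      rw [abs_div, abs_of_pos (hc x₀ hx₀S)]
      exact hmin x (mem_filter.2 ⟨hx, hgx⟩)
    have := (le_div_iff₀ (abs_pos.2 hgx)).1 ht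
    nlinarith [neg_abs_le (t * g x), le_abs_self (t * g x), abs_mul t (g x)]
  have hsum : ∑ x ∈ S, (c x - t * g x) • x = ∑ x ∈ S, c x • x := by
    simp only [sub_smul, mul_smul, sum_sub_distrib, ← smul_sum, hg, smul_zero, sub_zero]
  refine ⟨S.filter fun x => 0 < c x - t * g x, filter_ssubset.2 ⟨x₀, hx₀S, ?_⟩,
    fun x hx hgx => ?_, hsum ▸ isPositiveCombination_filter_pos hnonneg⟩
  · simp [t, div_mul_cancel₀ _ hgx₀]
  · simpa [hgx, hx] using hc x hx

theorem IsPositiveCombination.exists_linearIndepOn {S : Finset E} {v : E}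
    (h : IsPositiveCombination S v) :
    ∃ T ⊆ S, LinearIndepOn ℝ id (T : Set E) ∧ IsPositiveCombination T v := by
  induction S using Finset.strongInduction with
  | H S ih =>
  by_cases hli : LinearIndepOn ℝ id (S : Set E)
  · exact ⟨S, subset_rfl, hli, h⟩
  obtain ⟨g, hg, x, hx, hgx⟩ := not_linearIndepOn_finset_iff.1 hli
  obtain ⟨T, hTS, -, hT⟩ := h.exists_ssubset hg ⟨x, hx, hgx⟩
  obtain ⟨T', hT'T, hli', hT'⟩ := ih T hTS hT
  exact ⟨T', hT'T.trans hTS.subset, hli', hT'⟩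

theorem exists_linearIndepOn_isPositiveCombination_of_mem_hull {X : Finset E} {v : E}
    (hv : v ∈ hull ℝ (X : Set E)) :
    ∃ S ⊆ X, LinearIndepOn ℝ id (S : Set E) ∧ IsPositiveCombination S v := by
  classical
  obtain ⟨c, hc, rfl⟩ := mem_hull_finset_iff.1 hv
  obtain ⟨S, hS, hli, hSv⟩ := (isPositiveCombination_filter_pos hc).exists_linearIndepOn
  exact ⟨S, hS.trans (filter_subset _ _), hli, hSv⟩

theorem IsPositiveCombination.exists_circuit [DecidableEq E] {S : Finset E}
    (h : IsPositiveCombination S 0) (hS : S.Nonempty) :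
    ∃ A ⊆ S, A.Nonempty ∧ IsPositiveCombination A 0 ∧
      ∀ a ∈ A, LinearIndepOn ℝ id (A.erase a : Set E) := by
  induction S using Finset.strongInduction with
  | H S ih =>
  by_cases hli : ∀ a ∈ S, LinearIndepOn ℝ id (S.erase a : Set E)
  · exact ⟨S, subset_rfl, hS, h, hli⟩
  push Not at hli
  obtain ⟨a, ha, hdep⟩ := hli
  obtain ⟨g, hg, x, hx, hgx⟩ := not_linearIndepOn_finset_iff.1 hdep
  set g' : E → ℝ := fun y => if y = a then 0 else g y
  have hg' : ∑ y ∈ S, g' y • y = 0 := by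
    rw [← sum_erase S (f := fun y => g' y • y) (a := a) (by simp [g']), ← hg]
    exact sum_congr rfl fun y hy => by simp [g', ne_of_mem_erase hy]
  obtain ⟨T, hTS, haT, hT⟩ :=
    h.exists_ssubset hg' ⟨x, mem_of_mem_erase hx, by simpa [g', ne_of_mem_erase hx] using hgx⟩
  obtain ⟨A, hAT, hA⟩ := ih T hTS hT ⟨a, haT a ha (by simp [g'])⟩
  exact ⟨A, hAT.trans hTS.subset, hA⟩

theorem exists_isPositiveCombination_zero_of_neg_mem_hull {X : Finset E} {v : E}
    (hv : v ∈ hull ℝ (X : Set E)) (hnv : -v ∈ hull ℝ (X : Set E)) (hv0 : v ≠ 0) :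
    ∃ S ⊆ X, S.Nonempty ∧ IsPositiveCombination S 0 := by
  classical
  obtain ⟨S, hSX, -, hS⟩ := exists_linearIndepOn_isPositiveCombination_of_mem_hull hv
  obtain ⟨T, hTX, -, hT⟩ := exists_linearIndepOn_isPositiveCombination_of_mem_hull hnv
  refine ⟨S ∪ T, union_subset hSX hTX, ?_, by simpa using hS.union hT⟩
  refine union_nonempty.2 (.inl (nonempty_iff_ne_empty.2 ?_))
  rintro rfl
  obtain ⟨c, -, hc⟩ := hS
  exact hv0 (by simpa using hc.symm)

theorem IsPositiveCombination.finrank_span_eq [DecidableEq E] {A : Finset E} {a : E}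
    (h : IsPositiveCombination A 0) (ha : a ∈ A) (hli : LinearIndepOn ℝ id (A.erase a : Set E)) :
    finrank ℝ (span ℝ (A : Set E)) = #A - 1 := by
  have ha' : a ∈ span ℝ (A.erase a : Set E) := by
    have : -a ∈ span ℝ (A.erase a : Set E) :=
      PointedCone.hull_le_span ℝ _ (h.neg_mem_hull_erase ha)
    simpa using neg_mem this
  have hspan : span ℝ (A : Set E) = span ℝ (A.erase a : Set E) := by
    refine le_antisymm (span_le.2 fun x hx => ?_) (span_mono (by simp))
    rcases eq_or_ne x a with rfl | hxa
    · exact ha'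
    · exact subset_span (mem_erase.2 ⟨hxa, hx⟩)
  rw [hspan, finrank_span_finset_eq_card hli, card_erase_of_mem ha]

theorem IsPositiveCombination.one_lt_card {A : Finset E} {a : E}
    (h : IsPositiveCombination A 0) (ha : a ∈ A) (h0 : (0 : E) ∉ A) : 1 < #A := by
  classical
  by_contra! hA
  have hempty : A.erase a = ∅ := card_eq_zero.1 (by rw [card_erase_of_mem ha]; omega)
  have := h.neg_mem_hull_erase ha
  rw [hempty, coe_empty, PointedCone.hull, span_empty, mem_bot, neg_eq_zero] at this
  exact h0 (this ▸ ha)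

theorem exists_circuit_of_submodule_le_hull [DecidableEq E] {X : Finset E} (hX : (0 : E) ∉ X)
    {W : Submodule ℝ E} (hW : (W : Set E) ⊆ hull ℝ (X : Set E)) (hW0 : W ≠ ⊥) :
    ∃ A ⊆ X, ∃ a ∈ A, IsPositiveCombination A 0 ∧ LinearIndepOn ℝ id (A.erase a : Set E) ∧
      1 < #A := by
  obtain ⟨v, hvW, hv0⟩ := W.exists_mem_ne_zero_of_ne_bot hW0
  obtain ⟨S, hSX, hSne, hS0⟩ :=
    exists_isPositiveCombination_zero_of_neg_mem_hull (hW hvW) (hW (W.neg_mem hvW)) hv0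
  obtain ⟨A, hAS, ⟨a, ha⟩, hA0, hAli⟩ := hS0.exists_circuit hSne
  exact ⟨A, hAS.trans hSX, a, ha, hA0, hAli a ha,
    hA0.one_lt_card ha fun h => hX (hAS.trans hSX h)⟩

end PositiveCombination

section LinearImage

variable {E F : Type*} [AddCommGroup E] [Module ℝ E] [AddCommGroup F] [Module ℝ F]

theorem finrank_span_image_add_card_le [DecidableEq E] [DecidableEq F] (f : E →ₗ[ℝ] F)
    {L S : Finset E} (hL : LinearIndepOn ℝ id (L : Set E)) (hLf : ∀ x ∈ L, f x = 0) (hLS : L ⊆ S)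
    (T : Finset E) :
    finrank ℝ (span ℝ ((T.image f : Finset F) : Set F)) + #L ≤
      finrank ℝ (span ℝ ((S ∪ T : Finset E) : Set E)) := by
  set P := span ℝ ((S ∪ T : Finset E) : Set E)
  rw [← P.finrank_map_add_finrank_inf_ker f, ← finrank_span_finset_eq_card hL]
  refine add_le_add (finrank_mono ?_) (finrank_mono ?_)
  · rw [map_span, Finset.coe_image]
    exact span_mono (Set.image_mono (by simp))
  · refine le_inf (span_mono ?_) (span_le.2 fun x hx => LinearMap.mem_ker.2 (hLf x hx))
    exact coe_subset.2 (hLS.trans subset_union_left)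

theorem map_mem_hull_image_erase_zero [DecidableEq F] (f : E →ₗ[ℝ] F) {X : Finset E} {v : E}
    (hv : v ∈ hull ℝ (X : Set E)) :
    f v ∈ hull ℝ (((X.image f).erase (0 : F) : Finset F) : Set F) := by
  rw [coe_erase, Finset.coe_image, PointedCone.hull, span_sdiff_singleton_zero]
  exact apply_mem_span_image_of_mem_span (f.restrictScalars ℝ≥0) hv

theorem exists_lift_isPositiveCombination [DecidableEq F] (f : E →ₗ[ℝ] F) {X : Finset E}
    {Y : Finset F} (hY : Y ⊆ X.image f) (hY0 : IsPositiveCombination Y 0) :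
    ∃ Y₀ ⊆ X, Y₀.image f = Y ∧ #Y₀ = #Y ∧ ∃ w, f w = 0 ∧ IsPositiveCombination Y₀ w := by
  obtain ⟨Y₀, hY₀X, hinj, rfl⟩ :=
    exists_subset_injOn_image_eq_of_surjOn (X : Set E) Y fun y hy => by simpa using hY hy
  obtain ⟨β, hβ, hsum⟩ := hY0
  refine ⟨Y₀, hY₀X, rfl, (card_image_of_injOn hinj).symm, ∑ e ∈ Y₀, β (f e) • e, ?_,
    fun e => β (f e), fun e he => hβ _ (mem_image_of_mem f he), rfl⟩
  simp only [map_sum, map_smul]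
  rwa [sum_image hinj] at hsum

end LinearImage

theorem exists_subset_isPositiveCombination_zero_card_le (s : ℕ) {E : Type*} [AddCommGroup E]
    [Module ℝ E] {X : Finset E} (hX : (0 : E) ∉ X) {W : Submodule ℝ E}
    (hW : (W : Set E) ⊆ hull ℝ (X : Set E)) (hs : s ≤ finrank ℝ W) :
    ∃ Y ⊆ X, IsPositiveCombination Y 0 ∧ s ≤ finrank ℝ (span ℝ (Y : Set E)) ∧
      #Y ≤ max (finrank ℝ (span ℝ (Y : Set E)) + 1) (2 * s) := by
  classical
  induction s using Nat.strong_induction_on generalizing E with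
  | _ s ih =>
  rcases Nat.eq_zero_or_pos s with rfl | hs0
  · exact ⟨∅, empty_subset _, ⟨0, by simp, by simp⟩, by simp, by simp⟩
  have : FiniteDimensional ℝ W := finiteDimensional_of_le
    (fun x hx => PointedCone.hull_le_span ℝ _ (hW hx) : W ≤ span ℝ (X : Set E))
  obtain ⟨A, hAX, a₀, ha₀, hA0, hAli, hA1⟩ :=
    exists_circuit_of_submodule_le_hull hX hW (by rintro rfl; rw [finrank_bot] at hs; omega)
  set U := span ℝ (A : Set E)
  have hU : finrank ℝ U = #A - 1 := hA0.finrank_span_eq ha₀ hAli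
  by_cases hsU : s ≤ finrank ℝ U
  · exact ⟨A, hAX, hA0, hsU, le_max_of_le_left (show #A ≤ finrank ℝ U + 1 by omega)⟩
  have hW' := W.finrank_le_finrank_map_mkQ_add U
  obtain ⟨Y', hY'X, hY'0, hsY', hY'card⟩ := ih (s - finrank ℝ U) (by omega)
    (notMem_erase 0 (X.image U.mkQ)) (W := W.map U.mkQ)
    (by rintro _ ⟨w, hw, rfl⟩; exact map_mem_hull_image_erase_zero _ (hW hw)) (by omega)
  obtain ⟨Y₀, hY₀X, hY₀Y', hY₀card, w, hw, hY₀w⟩ :=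
    exists_lift_isPositiveCombination U.mkQ (hY'X.trans (erase_subset _ _)) hY'0
  obtain ⟨A₂, hA₂A, hA₂li, hA₂w⟩ := exists_linearIndepOn_isPositiveCombination_of_mem_hull
    (hA0.span_subset_hull (U.neg_mem ((Submodule.Quotient.mk_eq_zero U).1 hw)))
  have hmkQ : ∀ L ⊆ A, ∀ x ∈ L, U.mkQ x = 0 := fun L hL x hx =>
    (Submodule.Quotient.mk_eq_zero U).2 (subset_span (hL hx))
  -- `A₂ ∪ Y₀` has `#A₂` more dimensions than `Y'` for `#A₂` more elements, `A ∪ Y₀` has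
  -- `#A - 1` more dimensions for `#A` more elements
  by_cases hcase : s ≤ finrank ℝ (span ℝ (Y' : Set (E ⧸ U))) ∧
    #Y' ≤ finrank ℝ (span ℝ (Y' : Set (E ⧸ U))) + 1
  · have hdim := finrank_span_image_add_card_le U.mkQ hA₂li (hmkQ A₂ hA₂A) subset_rfl Y₀
    rw [hY₀Y'] at hdim
    have := card_union_le A₂ Y₀
    exact ⟨A₂ ∪ Y₀, union_subset (hA₂A.trans hAX) hY₀X, by simpa using hA₂w.union hY₀w,
      by omega, le_max_of_le_left (by omega)⟩
  · have hdim := finrank_span_image_add_card_le U.mkQ hAli (hmkQ _ (erase_subset _ _))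
      (erase_subset a₀ A) Y₀
    rw [hY₀Y', card_erase_of_mem ha₀] at hdim
    have := card_union_le A Y₀
    refine ⟨A ∪ Y₀, union_subset hAX hY₀X, ?_, by omega, le_max_of_le_right (by omega)⟩
    simpa [union_eq_left.2 hA₂A] using (hA0.union hA₂w).union hY₀w

section Closed

variable {E : Type*} [NormedAddCommGroup E] [NormedSpace ℝ E]

theorem isClosed_hull_of_linearIndepOn {S : Finset E}
    (hS : LinearIndepOn ℝ id (S : Set E)) : IsClosed (hull ℝ (S : Set E) : Set E) := by
  set T := Fintype.linearCombination ℝ ((↑) : S → E)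
  have hT : LinearMap.ker T = ⊥ :=
    LinearMap.ker_eq_bot.2 hS.linearIndependent.fintypeLinearCombination_injective
  have himage : (hull ℝ (S : Set E) : Set E) = T '' Set.Ici 0 := by
    ext v
    rw [SetLike.mem_coe, PointedCone.hull, mem_span_finset']
    constructor
    · rintro ⟨f, rfl⟩
      exact ⟨fun a => f a, fun a => (f a).2, by simp [T, Fintype.linearCombination_apply]⟩
    · rintro ⟨g, hg, rfl⟩
      exact ⟨fun a => ⟨g a, hg a⟩, by simp [T, Fintype.linearCombination_apply]⟩
  rw [himage]
  exact (LinearMap.isClosedEmbedding_of_injective hT).isClosedMap _ isClosed_Ici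

theorem isClosed_hull_finset (X : Finset E) :
    IsClosed (hull ℝ (X : Set E) : Set E) := by
  classical
  have hunion : (hull ℝ (X : Set E) : Set E) =
      ⋃ (S : Finset E)
        (_ : S ∈ X.powerset.filter fun S : Finset E => LinearIndepOn ℝ id (S : Set E)),
        (hull ℝ (S : Set E) : Set E) := by
    ext v
    simp only [SetLike.mem_coe, Set.mem_iUnion, mem_filter, mem_powerset, exists_prop]
    constructor
    · intro hv
      obtain ⟨S, hSX, hli, hS⟩ := exists_linearIndepOn_isPositiveCombination_of_mem_hull hv
      exact ⟨S, ⟨hSX, hli⟩, hS.mem_hull⟩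
    · rintro ⟨S, ⟨hSX, -⟩, hv⟩
      exact span_mono (by simpa using hSX) hv
  rw [hunion]
  exact isClosed_biUnion_finset fun S hS => isClosed_hull_of_linearIndepOn (mem_filter.1 hS).2

end Closed

section InnerProduct

variable {E : Type*} [NormedAddCommGroup E] [InnerProductSpace ℝ E]

theorem orthogonal_span_solutions_subset_hull [CompleteSpace E] (A : Finset E) :
    ((span ℝ {x | ∀ a ∈ A, ⟪a, x⟫ ≤ 0})ᗮ : Set E) ⊆ hull ℝ (A : Set E) := by
  intro z hz
  by_contra hzA
  obtain ⟨y, hy, hzy⟩ :=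
    ProperCone.hyperplane_separation' ⟨hull ℝ (A : Set E), isClosed_hull_finset A⟩ hzA
  have hsol : -y ∈ span ℝ {x | ∀ a ∈ A, ⟪a, x⟫ ≤ 0} := subset_span fun a ha => by
    rw [inner_neg_right, neg_nonpos]
    exact hy a (PointedCone.subset_hull ha)
  have := Submodule.inner_right_of_mem_orthogonal hsol hz
  rw [inner_neg_left, real_inner_comm] at this
  linarith

theorem IsPositiveCombination.mem_orthogonal_span {B : Finset E} (hB : IsPositiveCombination B 0)
    {x : E} (hx : ∀ a ∈ B, ⟪a, x⟫ ≤ 0) : x ∈ (span ℝ (B : Set E))ᗮ := by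
  have hhull : ∀ v ∈ hull ℝ (B : Set E), ⟪v, x⟫ ≤ 0 := by
    intro v hv
    obtain ⟨c, hc, rfl⟩ := mem_hull_finset_iff.1 hv
    rw [sum_inner]
    exact sum_nonpos fun a ha => by
      rw [real_inner_smul_left]
      exact mul_nonpos_of_nonneg_of_nonpos (hc a ha) (hx a ha)
  refine (mem_orthogonal _ _).2 fun v hv => le_antisymm (hhull v (hB.span_subset_hull hv)) ?_
  have := hhull (-v) (hB.span_subset_hull (neg_mem hv))
  rw [inner_neg_left] at this
  linarith

end InnerProduct

theorem homogeneous_system_helly_general (d k : ℕ) (hkd : k ≤ d)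
    (A : Finset (EuclideanSpace ℝ (Fin d))) (hA : ∀ a ∈ A, a ≠ 0) :
    (∃ x : Fin k → EuclideanSpace ℝ (Fin d), LinearIndependent ℝ x ∧
        ∀ i, ∀ a ∈ A, ⟪a, x i⟫ ≤ 0) ↔
      (∀ B ⊆ A, B.card ≤ max (d + 1) (2 * (d - k + 1)) →
        ∃ x : Fin k → EuclideanSpace ℝ (Fin d), LinearIndependent ℝ x ∧
          ∀ i, ∀ a ∈ B, ⟪a, x i⟫ ≤ 0) := by
  refine ⟨fun ⟨x, hx, hsol⟩ B hBA _ => ⟨x, hx, fun i a ha => hsol i a (hBA ha)⟩, fun hB => ?_⟩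
  set C := {x : EuclideanSpace ℝ (Fin d) | ∀ a ∈ A, ⟪a, x⟫ ≤ 0}
  suffices k ≤ finrank ℝ (span ℝ C) from
    let ⟨x, hx, hxC⟩ := exists_linearIndependent_fin_of_le_finrank_span this
    ⟨x, hx, fun i => hxC i⟩
  by_contra! hC
  have hE : finrank ℝ (EuclideanSpace ℝ (Fin d)) = d := finrank_euclideanSpace_fin
  have hdim := (span ℝ C).finrank_add_finrank_orthogonal
  obtain ⟨B, hBA, hB0, hBdim, hBcard⟩ :=
    exists_subset_isPositiveCombination_zero_card_le (d - k + 1) (fun h => hA 0 h rfl)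
      (W := (span ℝ C)ᗮ) (orthogonal_span_solutions_subset_hull A) (by omega)
  have hBd := (span ℝ (B : Set (EuclideanSpace ℝ (Fin d)))).finrank_le
  obtain ⟨x, hx, hxB⟩ := hB B hBA (hBcard.trans (max_le_max (by omega) le_rfl))
  have hkB : k ≤ finrank ℝ (span ℝ (B : Set (EuclideanSpace ℝ (Fin d))))ᗮ := by
    rw [← Fintype.card_fin k, ← finrank_span_eq_card hx]
    exact finrank_mono (span_le.2 (Set.range_subset_iff.2 fun i => hB0.mem_orthogonal_span (hxB i)))
  have := (span ℝ (B : Set (EuclideanSpace ℝ (Fin d)))).finrank_add_finrank_orthogonal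
  omega

/-- Corollary on homogeneous systems of linear inequalities: the system `a·x ≤ 0, a ∈ A`
has `k` linearly independent solutions iff every subsystem of size at most
`m(k,d) = max {d+1, 2(d-k+1)}` does. -/
theorem homogeneous_system_helly (d k : ℕ) (hk1 : 1 ≤ k) (hkd : k ≤ d)
    (A : Finset (EuclideanSpace ℝ (Fin d))) (hA : ∀ a ∈ A, a ≠ 0) :
    (∃ x : Fin k → EuclideanSpace ℝ (Fin d), LinearIndependent ℝ x ∧
        ∀ i, ∀ a ∈ A, ⟪a, x i⟫ ≤ 0) ↔
      (∀ B ⊆ A, B.card ≤ max (d + 1) (2 * (d - k + 1)) →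
        ∃ x : Fin k → EuclideanSpace ℝ (Fin d), LinearIndependent ℝ x ∧
          ∀ i, ∀ a ∈ B, ⟪a, x i⟫ ≤ 0) :=
  homogeneous_system_helly_general d k hkd A hA
end

section
/- Let k ∈ {0,1,…,d}, m(k,d) = max{d+1, 2(d−k+1)}, and let 𝒞 be a finite family of convex sets in ℝ^d. If dim(⋂𝒞*) ≥ k for every subfamily 𝒞* ⊆ 𝒞 of size at most m(k,d), then dim(⋂𝒞) ≥ k. -/
/-!
By Helly's theorem the intersection `T` of the family contains a point `p`. Inducting on the
size of the family, we may assume that `dim T < k` while every `⋂ (𝒞 \ {C})` has dimension at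
least `k`, and we show that `𝒞` is then small. Let `N C` be the cone of feasible directions at
`p` of `⋂ (𝒞 \ {C})` and `L` the linear span of the feasible cone of `T`. Modulo `L`, the cones
`N C` have dimension at least `k - dim L`, and their sums over disjoint subfamilies meet only in
`0`: a common point, corrected by a direction of `T`, is a feasible direction of every member of
`𝒞`, hence of `T`.

Such a family of cones in a space of dimension `n`, each of dimension at least `κ ≥ 1`, has at
most `max (n + 1) (2 (n + 1 - κ))` members. Among `n + 2` of them, an affine dependence between
relative interior points splits off two disjoint subfamilies `A`, `B` whose sums are linear
subspaces `U_A`, `U_B` with `U_A ∩ U_B = 0`. Induct on `A` inside `U_A`, on `B` inside `U_B`,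
and on the remaining cones modulo `U_A + U_B`, where each of them still has dimension `≥ 1`.
-/

open Module Set Filter Topology Pointwise

variable {E : Type*} [AddCommGroup E] [Module ℝ E]

theorem Convex.add_smul_mem_of_le {s : Set E} (hs : Convex ℝ s) {p x : E} (hp : p ∈ s) {ε δ : ℝ}
    (hε : p + ε • x ∈ s) (hδ : 0 ≤ δ) (hδε : δ ≤ ε) : p + δ • x ∈ s := by
  rcases hδ.eq_or_lt with rfl | hδ
  · simpa using hp
  have hε0 : 0 < ε := hδ.trans_le hδε
  convert hs.add_smul_mem hp hε ⟨div_nonneg hδ.le hε0.le, (div_le_one hε0).2 hδε⟩ using 2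
  rw [smul_smul, div_mul_cancel₀ _ hε0.ne']

theorem Submodule.finrank_map_mkQ_add_finrank [FiniteDimensional ℝ E] {V W : Submodule ℝ E}
    (h : V ≤ W) : finrank ℝ (W.map V.mkQ) + finrank ℝ V = finrank ℝ W := by
  have := LinearMap.finrank_range_add_finrank_ker (V.mkQ.domRestrict W)
  rwa [LinearMap.range_domRestrict, LinearMap.ker_domRestrict, Submodule.ker_mkQ,
    (Submodule.comapSubtypeEquivOfLe h).finrank_eq] at this

theorem exists_affine_relation [FiniteDimensional ℝ E] {ι : Type*} (s : Finset ι) (z : ι → E)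
    (W : Submodule ℝ E) (hz : ∀ i ∈ s, z i ∈ W) (hcard : finrank ℝ W + 1 < s.card) :
    ∃ t ⊆ s, t.Nonempty ∧ ∃ c : ι → ℝ, (∀ i ∈ t, c i ≠ 0) ∧
      ∑ i ∈ t, c i = 0 ∧ ∑ i ∈ t, c i • z i = 0 := by
  classical
  have hdep : ¬AffineIndependent ℝ (fun i : s => (⟨z i, hz i i.2⟩ : W)) := fun h => by
    have := h.card_le_finrank_succ
    have := Submodule.finrank_le (vectorSpan ℝ (range fun i : s => (⟨z i, hz i i.2⟩ : W)))
    simp only [Fintype.card_coe] at *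
    omega
  simp only [affineIndependent_iff, not_forall] at hdep
  obtain ⟨t, w, hw, hwz, i, hi, hwi⟩ := hdep
  set c : ι → ℝ := fun j => if h : j ∈ s then w ⟨j, h⟩ else 0
  set t' := (t.map (Function.Embedding.subtype _)).filter (c · ≠ 0)
  refine ⟨t', fun j hj => ?_, ⟨i, ?_⟩, c, fun j hj => (Finset.mem_filter.1 hj).2, ?_, ?_⟩
  · obtain ⟨j, -, rfl⟩ := Finset.mem_map.1 (Finset.mem_filter.1 hj).1; exact j.2
  · simpa [t', c] using ⟨hi, hwi⟩
  · rw [Finset.sum_filter_ne_zero, Finset.sum_map]; simpa [c] using hw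
  · rw [Finset.sum_filter_of_ne (p := (c · ≠ 0)) fun j _ hj h0 => hj (by rw [h0, zero_smul]),
      Finset.sum_map]
    simpa [c, ← Submodule.coe_sum] using congrArg Subtype.val hwz

theorem exists_pos_sum_smul_eq_sum_smul [FiniteDimensional ℝ E] {ι : Type*} (s : Finset ι)
    (z : ι → E) (W : Submodule ℝ E) (hz : ∀ i ∈ s, z i ∈ W) (hcard : finrank ℝ W + 1 < s.card) :
    ∃ A ⊆ s, ∃ B ⊆ s, Disjoint A B ∧ A.Nonempty ∧ B.Nonempty ∧ ∃ c : ι → ℝ,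
      (∀ i ∈ A, 0 < c i) ∧ (∀ i ∈ B, 0 < c i) ∧ ∑ i ∈ A, c i • z i = ∑ i ∈ B, c i • z i := by
  obtain ⟨t, hts, ⟨i₀, hi₀⟩, c, hc, hc0, hcz⟩ := exists_affine_relation s z W hz hcard
  have hneg : ∀ i ∈ t.filter (¬0 < c ·), c i < 0 := fun i hi =>
    (not_lt.1 (Finset.mem_filter.1 hi).2).lt_of_ne (hc i (Finset.mem_filter.1 hi).1)
  refine ⟨t.filter (0 < c ·), (Finset.filter_subset _ _).trans hts, t.filter (¬0 < c ·),
    (Finset.filter_subset _ _).trans hts, Finset.disjoint_filter_filter_not t t _, ?_, ?_,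
    fun i => |c i|, fun i hi => abs_pos.2 (hc i (Finset.mem_filter.1 hi).1),
    fun i hi => abs_pos.2 (hc i (Finset.mem_filter.1 hi).1), ?_⟩
  · by_contra hA
    refine hc i₀ hi₀ ((Finset.sum_eq_zero_iff_of_nonpos fun j hj => ?_).1 hc0 i₀ hi₀)
    exact not_lt.1 fun hj' => hA (Finset.filter_nonempty_iff.2 ⟨j, hj, hj'⟩)
  · by_contra hB
    refine hc i₀ hi₀ ((Finset.sum_eq_zero_iff_of_nonneg fun j hj => ?_).1 hc0 i₀ hi₀)
    exact not_lt.1 fun hj' => hB (Finset.filter_nonempty_iff.2 ⟨j, hj, not_lt.2 hj'.le⟩)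
  · rw [← Finset.sum_filter_add_sum_filter_not t (0 < c ·), add_eq_zero_iff_eq_neg] at hcz
    beta_reduce
    rw [Finset.sum_congr rfl fun i hi => by rw [abs_of_pos (Finset.mem_filter.1 hi).2], hcz,
      ← Finset.sum_neg_distrib]
    exact Finset.sum_congr rfl fun i hi => by rw [abs_of_neg (hneg i hi), neg_smul]

namespace PointedCone

section FeasibleCone

def feasibleCone (s : Set E) (p : E) : PointedCone ℝ E := hull ℝ ((· - p) '' s)

theorem feasibleCone_mono {s t : Set E} (h : s ⊆ t) (p : E) : feasibleCone s p ≤ feasibleCone t p :=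
  Submodule.span_mono (image_mono h)

theorem span_feasibleCone {s : Set E} {p : E} (hp : p ∈ s) :
    Submodule.span ℝ (feasibleCone s p : Set E) = vectorSpan ℝ s := by
  rw [feasibleCone, Submodule.span_span_of_tower, vectorSpan_eq_span_vsub_set_right ℝ hp]
  rfl

variable {s : Set E} {p x : E}

theorem mem_feasibleCone_iff (hs : Convex ℝ s) (hp : p ∈ s) :
    x ∈ feasibleCone s p ↔ ∃ ε : ℝ, 0 < ε ∧ p + ε • x ∈ s := by
  refine ⟨fun hx => ?_, fun ⟨ε, hε, hx⟩ => ?_⟩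
  · induction hx using Submodule.span_induction with
    | mem y hy =>
      obtain ⟨q, hq, rfl⟩ := hy
      exact ⟨1, one_pos, by simpa using hq⟩
    | zero => exact ⟨1, one_pos, by simpa using hp⟩
    | add x y _ _ hx hy =>
      obtain ⟨ε, hε, hεx⟩ := hx
      obtain ⟨δ, hδ, hδy⟩ := hy
      have hx' := hs.add_smul_mem_of_le hp hεx (lt_min hε hδ).le (min_le_left ε δ)
      have hy' := hs.add_smul_mem_of_le hp hδy (lt_min hε hδ).le (min_le_right ε δ)
      refine ⟨min ε δ / 2, half_pos (lt_min hε hδ), ?_⟩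
      convert hs hx' hy' (a := 1 / 2) (b := 1 / 2) (by norm_num) (by norm_num) (by norm_num) using 1
      module
    | smul c x _ hx =>
      obtain ⟨ε, hε, hεx⟩ := hx
      obtain ⟨c, hc⟩ := c
      rcases hc.eq_or_lt with rfl | hc
      · exact ⟨1, one_pos, by simpa using hp⟩
      · refine ⟨ε / c, div_pos hε hc, ?_⟩
        convert hεx using 2
        simp [Nonneg.mk_smul, smul_smul, div_mul_cancel₀ _ hc.ne']
  · have : ε⁻¹ • ((p + ε • x) - p) = x := by simp [smul_smul, inv_mul_cancel₀ hε.ne']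
    rw [← this]
    exact (feasibleCone s p).smul_mem (inv_nonneg.2 hε.le) (subset_hull ⟨_, hx, rfl⟩)

theorem mem_feasibleCone_iff_eventually (hs : Convex ℝ s) (hp : p ∈ s) :
    x ∈ feasibleCone s p ↔ ∀ᶠ ε in 𝓝[>] (0 : ℝ), p + ε • x ∈ s := by
  rw [mem_feasibleCone_iff hs hp]
  refine ⟨fun ⟨ε, hε, hx⟩ => ?_, fun h => (h.and self_mem_nhdsWithin).exists.imp
    fun ε h => ⟨h.2, h.1⟩⟩
  filter_upwards [Ioc_mem_nhdsGT hε] with δ hδ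
  exact hs.add_smul_mem_of_le hp hx hδ.1.le hδ.2

theorem iInf_feasibleCone_le {𝒞 : Finset (Set E)} (hconv : ∀ C ∈ 𝒞, Convex ℝ C)
    (hp : ∀ C ∈ 𝒞, p ∈ C) : ⨅ C ∈ 𝒞, feasibleCone C p ≤ feasibleCone (⋂₀ (𝒞 : Set (Set E))) p := by
  intro x hx
  simp only [Submodule.mem_iInf] at hx
  have hpT : p ∈ ⋂₀ (𝒞 : Set (Set E)) := mem_sInter.2 fun C hC => hp C hC
  rw [mem_feasibleCone_iff_eventually (convex_sInter fun C hC => hconv C hC) hpT]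
  have := (eventually_all_finset 𝒞).2 fun C hC =>
    (mem_feasibleCone_iff_eventually (hconv C hC) (hp C hC)).1 (hx C hC)
  simpa only [mem_sInter, Finset.mem_coe] using this

end FeasibleCone

section RelCore

/-- `z` lies in the (algebraic) relative interior of `K`. -/
def IsRelCore (K : PointedCone ℝ E) (z : E) : Prop :=
  z ∈ K ∧ ∀ x ∈ K, ∀ᶠ t : ℝ in atTop, t • z - x ∈ K

theorem IsRelCore.smul {K : PointedCone ℝ E} {z : E} (hz : K.IsRelCore z) {c : ℝ} (hc : 0 < c) :
    K.IsRelCore (c • z) := by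
  refine ⟨K.smul_mem hc.le hz.1, fun x hx => ?_⟩
  filter_upwards [(tendsto_id.atTop_mul_const hc).eventually (hz.2 x hx)] with t ht
  rwa [id, mul_smul] at ht

theorem exists_isRelCore [FiniteDimensional ℝ E] (K : PointedCone ℝ E) : ∃ z, K.IsRelCore z := by
  obtain ⟨b, hbK, hspan, hli⟩ := exists_linearIndependent ℝ (K : Set E)
  set T := hli.setFinite.toFinset
  have hTK : ∀ y ∈ T, y ∈ K := fun y hy => hbK (hli.setFinite.mem_toFinset.1 hy)
  refine ⟨∑ y ∈ T, y, K.sum_mem hTK, fun x hx => ?_⟩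
  have hxT : x ∈ Submodule.span ℝ (T : Set E) := by
    rw [hli.setFinite.coe_toFinset, hspan]; exact Submodule.subset_span hx
  obtain ⟨a, -, rfl⟩ := Submodule.mem_span_finset.1 hxT
  filter_upwards [eventually_ge_atTop (∑ y ∈ T, |a y|)] with t ht
  have hcoef : ∀ y ∈ T, 0 ≤ t - a y := fun y hy =>
    sub_nonneg.2 ((le_abs_self _).trans
      ((Finset.single_le_sum (fun y _ => abs_nonneg (a y)) hy).trans ht))
  have : t • ∑ y ∈ T, y - ∑ y ∈ T, a y • y = ∑ y ∈ T, (t - a y) • y := by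
    simp only [Finset.smul_sum, ← Finset.sum_sub_distrib, sub_smul]
  rw [this]
  exact K.sum_mem fun y hy => K.smul_mem (hcoef y hy) (hTK y hy)

variable {ι : Type*} {s : Finset ι} {K : ι → PointedCone ℝ E}

theorem neg_mem_iSup_of_sum_eq_zero {w : ι → E} (hw : ∀ i ∈ s, (K i).IsRelCore (w i))
    (hsum : ∑ i ∈ s, w i = 0) {x : E} (hx : x ∈ ⨆ i ∈ s, K i) : -x ∈ ⨆ i ∈ s, K i := by
  obtain ⟨μ, rfl⟩ := (Submodule.mem_iSup_finset_iff_exists_sum K x).1 hx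
  obtain ⟨t, ht⟩ := ((eventually_all_finset s).2 fun i hi => (hw i hi).2 _ (μ i).2).exists
  have : -∑ i ∈ s, (μ i : E) = ∑ i ∈ s, (t • w i - μ i) := by
    rw [Finset.sum_sub_distrib, ← Finset.smul_sum, hsum, smul_zero, zero_sub]
  rw [this]
  exact Submodule.sum_mem_biSup ht

theorem coe_lineal_iSup_of_sum_eq_zero {w : ι → E} (hw : ∀ i ∈ s, (K i).IsRelCore (w i))
    (hsum : ∑ i ∈ s, w i = 0) :
    ((⨆ i ∈ s, K i).lineal : PointedCone ℝ E) = ⨆ i ∈ s, K i :=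
  (lineal_le _).antisymm fun _ hx => ⟨hx, neg_mem_iSup_of_sum_eq_zero hw hsum hx⟩

end RelCore

theorem mem_span_iff_exists_sub {C : PointedCone ℝ E} {x : E} :
    x ∈ Submodule.span ℝ (C : Set E) ↔ ∃ a ∈ C, ∃ b ∈ C, a - b = x := by
  refine ⟨fun hx => ?_, fun ⟨a, ha, b, hb, hab⟩ => hab ▸
    sub_mem (Submodule.subset_span ha) (Submodule.subset_span hb)⟩
  have hle : Submodule.span ℝ (C : Set E) ≤ (C ⊔ -C).lineal := Submodule.span_le.2 fun y hy =>
    ⟨Submodule.mem_sup_left hy, Submodule.mem_sup_right (by simpa using hy)⟩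
  obtain ⟨a, ha, c, hc, rfl⟩ := Submodule.mem_sup.1 (hle hx).1
  exact ⟨a, ha, -c, Submodule.mem_neg.1 hc, by rw [sub_neg_eq_add]⟩

theorem map_biSup {ι F : Type*} [AddCommGroup F] [Module ℝ F] (f : E →ₗ[ℝ] F) (s : Finset ι)
    (K : ι → PointedCone ℝ E) : (⨆ i ∈ s, K i).map f = ⨆ i ∈ s, (K i).map f := by
  simp only [PointedCone.map, Submodule.map_iSup]

section DisjointSums

variable {ι : Type*}

/-- `⨆` of pointed cones is their Minkowski sum. -/
def DisjointSums (K : ι → PointedCone ℝ E) (s : Finset ι) : Prop :=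
  ∀ S ⊆ s, ∀ S' ⊆ s, Disjoint S S' → Disjoint (⨆ i ∈ S, K i) (⨆ i ∈ S', K i)

variable {K : ι → PointedCone ℝ E} {s : Finset ι}

theorem DisjointSums.mono (h : DisjointSums K s) {t : Finset ι} (ht : t ⊆ s) :
    DisjointSums K t :=
  fun S hS S' hS' => h S (hS.trans ht) S' (hS'.trans ht)

theorem DisjointSums.map_mkQ [DecidableEq ι] (h : DisjointSums K s) {P : Finset ι} (hP : P ⊆ s)
    {V : Submodule ℝ E} (hV : (V : PointedCone ℝ E) ≤ ⨆ i ∈ P, K i) :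
    DisjointSums (fun i => (K i).map V.mkQ) (s \ P) := by
  intro S hS S' hS' hSS'
  rw [Finset.subset_sdiff] at hS hS'
  simp only [← map_biSup, Submodule.disjoint_def, PointedCone.mem_map]
  rintro _ ⟨a, ha, rfl⟩ ⟨b, hb, hab⟩
  have hba : b - a ∈ V := (Submodule.Quotient.eq V).1 hab
  have hbSP : b ∈ ⨆ i ∈ S ∪ P, K i := by
    rw [Finset.iSup_union, ← add_sub_cancel a b]
    exact Submodule.add_mem_sup ha (hV hba)
  have hb0 := Submodule.disjoint_def.1
    (h _ (Finset.union_subset hS.1 hP) _ hS'.1 (Finset.disjoint_union_left.2 ⟨hSS', hS'.2.symm⟩))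
    b hbSP hb
  rw [← hab, hb0, map_zero]

theorem disjointSums_map_mkQ_span {N Q : ι → PointedCone ℝ E} {M : PointedCone ℝ E}
    (hNQ : ∀ i ∈ s, ∀ j ∈ s, i ≠ j → N i ≤ Q j) (hQM : ⨅ j ∈ s, Q j ≤ M)
    (hMN : ∀ i ∈ s, M ≤ N i) :
    DisjointSums (fun i => (N i).map (Submodule.span ℝ (M : Set E)).mkQ) s := by
  intro S hS S' hS' hSS'
  rcases S.eq_empty_or_nonempty with rfl | ⟨i, hi⟩
  · simp
  rcases S'.eq_empty_or_nonempty with rfl | ⟨i', hi'⟩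
  · simp
  have hle : ∀ {T : Finset ι}, T ⊆ s → ∀ j ∈ s, j ∉ T → ⨆ i ∈ T, N i ≤ Q j :=
    fun hT j hj hjT => iSup₂_le fun i hi => hNQ i (hT hi) j hj (ne_of_mem_of_not_mem hi hjT)
  simp only [← map_biSup, Submodule.disjoint_def, PointedCone.mem_map]
  rintro _ ⟨a, ha, rfl⟩ ⟨b, hb, hab⟩
  obtain ⟨m, hm, m', hm', hmm'⟩ :=
    mem_span_iff_exists_sub.1 ((Submodule.Quotient.eq _).1 hab)
  have hy : a + m ∈ ⨆ i ∈ S, N i :=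
    add_mem ha (le_iSup₂ (f := fun i (_ : i ∈ S) => N i) i hi (hMN i (hS hi) hm))
  have hy' : a + m ∈ ⨆ i ∈ S', N i := by
    rw [add_comm a m, sub_eq_sub_iff_add_eq_add.1 hmm']
    exact add_mem hb (le_iSup₂ (f := fun i (_ : i ∈ S') => N i) i' hi' (hMN i' (hS' hi') hm'))
  have hyM : a + m ∈ M := hQM <| by
    simp only [Submodule.mem_iInf]
    intro j hj
    by_cases hjS : j ∈ S
    · exact hle hS' j hj (Finset.disjoint_left.1 hSS' hjS) hy'
    · exact hle hS j hj hjS hy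
  rw [Submodule.mkQ_apply, Submodule.Quotient.mk_eq_zero, ← add_sub_cancel_right a m]
  exact sub_mem (Submodule.subset_span hyM) (Submodule.subset_span hm)

theorem DisjointSums.exists_split [FiniteDimensional ℝ E] (h : DisjointSums K s)
    {W : Submodule ℝ E} (hKW : ∀ i ∈ s, K i ≤ W) (hcard : finrank ℝ W + 1 < s.card) :
    ∃ A ⊆ s, ∃ B ⊆ s, Disjoint A B ∧ A.Nonempty ∧ B.Nonempty ∧
      (∃ UA : Submodule ℝ E, (UA : PointedCone ℝ E) = ⨆ i ∈ A, K i) ∧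
      ∃ UB : Submodule ℝ E, (UB : PointedCone ℝ E) = ⨆ i ∈ B, K i := by
  choose z hz using fun i => (K i).exists_isRelCore
  obtain ⟨A, hA, B, hB, hAB, hAne, hBne, c, hcA, hcB, hcz⟩ :=
    exists_pos_sum_smul_eq_sum_smul s z W (fun i hi => hKW i hi (hz i).1) hcard
  have hy0 : ∑ i ∈ A, c i • z i = 0 := Submodule.disjoint_def.1 (h A hA B hB hAB) _
    (Submodule.sum_mem_biSup fun i hi => (K i).smul_mem (hcA i hi).le (hz i).1)
    (hcz ▸ Submodule.sum_mem_biSup fun i hi => (K i).smul_mem (hcB i hi).le (hz i).1)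
  exact ⟨A, hA, B, hB, hAB, hAne, hBne,
    ⟨_, coe_lineal_iSup_of_sum_eq_zero (fun i hi => (hz i).smul (hcA i hi)) hy0⟩,
    _, coe_lineal_iSup_of_sum_eq_zero (fun i hi => (hz i).smul (hcB i hi)) (hcz ▸ hy0)⟩

theorem DisjointSums.span_map_mkQ_ne_bot [DecidableEq ι] (h : DisjointSums K s) {P : Finset ι}
    (hP : P ⊆ s) {V : Submodule ℝ E} (hV : (V : PointedCone ℝ E) ≤ ⨆ i ∈ P, K i) {l : ι}
    (hl : l ∈ s \ P) (hKl : Submodule.span ℝ (K l : Set E) ≠ ⊥) :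
    Submodule.span ℝ ((K l).map V.mkQ : Set (E ⧸ V)) ≠ ⊥ := by
  obtain ⟨hls, hlP⟩ := Finset.mem_sdiff.1 hl
  have hdisj := h {l} (Finset.singleton_subset_iff.2 hls) P hP
    (Finset.disjoint_singleton_left.2 hlP)
  rw [Finset.iSup_singleton] at hdisj
  simp only [Ne, Submodule.span_eq_bot, not_forall] at hKl ⊢
  obtain ⟨x, hx, hx0⟩ := hKl
  refine ⟨V.mkQ x, ⟨x, hx, rfl⟩, fun hxV => hx0 ?_⟩
  rw [Submodule.mkQ_apply, Submodule.Quotient.mk_eq_zero] at hxV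
  exact Submodule.disjoint_def.1 hdisj x hx (hV hxV)

theorem le_of_coe_eq_biSup {T : Finset ι} {U : Submodule ℝ E}
    (hU : (U : PointedCone ℝ E) = ⨆ i ∈ T, K i) {i : ι} (hi : i ∈ T) : K i ≤ U := by
  rw [hU]; exact le_iSup₂ (f := fun i (_ : i ∈ T) => K i) i hi

theorem le_of_coe_eq_biSup_le {T : Finset ι} {U W : Submodule ℝ E}
    (hU : (U : PointedCone ℝ E) = ⨆ i ∈ T, K i) (hKW : ∀ i ∈ T, K i ≤ W) : U ≤ W := by
  rw [← ofSubmodule_le_ofSubmodule, hU]; exact iSup₂_le hKW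

theorem DisjointSums.card_le [FiniteDimensional ℝ E] (h : DisjointSums K s) {W : Submodule ℝ E}
    (hKW : ∀ i ∈ s, K i ≤ W) {κ : ℕ} (hκ : 1 ≤ κ)
    (hdim : ∀ i ∈ s, κ ≤ finrank ℝ (Submodule.span ℝ (K i : Set E))) :
    s.card ≤ max (finrank ℝ W + 1) (2 * (finrank ℝ W + 1 - κ)) := by
  classical
  induction hn : finrank ℝ W using Nat.strong_induction_on generalizing E K s W κ with
  | _ n IH =>
  by_contra! hbig
  obtain ⟨A, hA, B, hB, hAB, ⟨a₀, ha₀⟩, ⟨b₀, hb₀⟩, ⟨UA, hUA⟩, UB, hUB⟩ :=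
    h.exists_split hKW (by have := le_max_left (n + 1) (2 * (n + 1 - κ)); omega)
  have hκA := (hdim a₀ (hA ha₀)).trans
    (Submodule.finrank_mono (Submodule.span_le.2 (le_of_coe_eq_biSup hUA ha₀)))
  have hκB := (hdim b₀ (hB hb₀)).trans
    (Submodule.finrank_mono (Submodule.span_le.2 (le_of_coe_eq_biSup hUB hb₀)))
  have hUAB : UA ⊓ UB = ⊥ := disjoint_iff.1 <| Submodule.disjoint_def.2 fun x hxA hxB =>
    Submodule.disjoint_def.1 (h A hA B hB hAB) x (by rw [← hUA]; exact hxA)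
      (by rw [← hUB]; exact hxB)
  have hV : ((UA ⊔ UB : Submodule ℝ E) : PointedCone ℝ E) ≤ ⨆ i ∈ A ∪ B, K i := by
    rw [Finset.iSup_union, ← hUA, ← hUB, ofSubmodule_sup]
  have hdimV := Submodule.finrank_sup_add_finrank_inf_eq UA UB
  rw [hUAB, finrank_bot] at hdimV
  have hVW := Submodule.finrank_map_mkQ_add_finrank (sup_le
    (le_of_coe_eq_biSup_le hUA fun i hi => hKW i (hA hi))
    (le_of_coe_eq_biSup_le hUB fun i hi => hKW i (hB hi)))
  have hcardA := IH _ (by omega) (h.mono hA) (fun _ => le_of_coe_eq_biSup hUA) hκ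
    (fun i hi => hdim i (hA hi)) rfl
  have hcardB := IH _ (by omega) (h.mono hB) (fun _ => le_of_coe_eq_biSup hUB) hκ
    (fun i hi => hdim i (hB hi)) rfl
  have hdimR : ∀ l ∈ s \ (A ∪ B), 1 ≤ finrank ℝ (Submodule.span ℝ
      ((K l).map (UA ⊔ UB).mkQ : Set (E ⧸ (UA ⊔ UB)))) := fun l hl =>
    Submodule.one_le_finrank_iff.2 <| h.span_map_mkQ_ne_bot (Finset.union_subset hA hB) hV hl
      fun hbot => by have := hdim l (Finset.mem_sdiff.1 hl).1; rw [hbot, finrank_bot] at this; omega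
  have hKR : ∀ l ∈ s \ (A ∪ B), (K l).map (UA ⊔ UB).mkQ ≤ W.map (UA ⊔ UB).mkQ :=
    fun l hl _ ⟨x, hx, hxe⟩ => ⟨x, hKW l (Finset.mem_sdiff.1 hl).1 hx, hxe⟩
  have hcardR := IH _ (by omega) (h.map_mkQ (Finset.union_subset hA hB) hV) hKR le_rfl hdimR rfl
  have hcard := Finset.card_sdiff_add_card_eq_card (Finset.union_subset hA hB)
  rw [Finset.card_union_of_disjoint hAB] at hcard
  rcases (s \ (A ∪ B)).eq_empty_or_nonempty with hR | ⟨l, hl⟩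
  · rw [hR, Finset.card_empty] at hcard
    omega
  · have := (hdimR l hl).trans (Submodule.finrank_mono (Submodule.span_le.2 (hKR l hl)))
    omega

end DisjointSums

end PointedCone

open PointedCone in
theorem card_le_of_finrank_vectorSpan_sInter_lt [FiniteDimensional ℝ E] {𝒞 : Finset (Set E)}
    (hconv : ∀ C ∈ 𝒞, Convex ℝ C) {p : E} (hp : p ∈ ⋂₀ (𝒞 : Set (Set E))) {k : ℕ}
    (hlt : finrank ℝ (vectorSpan ℝ (⋂₀ (𝒞 : Set (Set E)))) < k)
    (herase : ∀ C ∈ 𝒞, k ≤ finrank ℝ (vectorSpan ℝ (⋂₀ (↑(𝒞.erase C) : Set (Set E))))) :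
    𝒞.card ≤ max (finrank ℝ E + 1) (2 * (finrank ℝ E + 1 - k)) := by
  have hpC : ∀ C ∈ 𝒞, p ∈ C := fun C hC => mem_sInter.1 hp C hC
  have hpN : ∀ C, p ∈ ⋂₀ (↑(𝒞.erase C) : Set (Set E)) := fun C =>
    mem_sInter.2 fun C' hC' => hpC C' (Finset.mem_of_mem_erase hC')
  set M := feasibleCone (⋂₀ (𝒞 : Set (Set E))) p
  set N := fun C => feasibleCone (⋂₀ (↑(𝒞.erase C) : Set (Set E))) p
  have hMN : ∀ C ∈ 𝒞, M ≤ N C := fun C _ =>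
    feasibleCone_mono (sInter_subset_sInter (Finset.coe_subset.2 (Finset.erase_subset C 𝒞))) p
  have hdisj : DisjointSums (fun C => (N C).map (Submodule.span ℝ (M : Set E)).mkQ) 𝒞 :=
    disjointSums_map_mkQ_span (Q := fun C => feasibleCone C p)
      (fun C _ C' hC' hne => feasibleCone_mono
        (sInter_subset_of_mem (Finset.mem_coe.2 (Finset.mem_erase.2 ⟨hne.symm, hC'⟩))) p)
      (iInf_feasibleCone_le hconv hpC) hMN
  have hL : finrank ℝ (Submodule.span ℝ (M : Set E)) < k := by rwa [span_feasibleCone hp]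
  have hN : ∀ C ∈ 𝒞, k ≤ finrank ℝ (Submodule.span ℝ (N C : Set E)) := fun C hC => by
    rw [span_feasibleCone (hpN C)]; exact herase C hC
  have hcard := hdisj.card_le (W := ⊤) (fun _ _ _ _ => Submodule.mem_top)
    (κ := k - finrank ℝ (Submodule.span ℝ (M : Set E))) (by omega) fun C hC => by
      have := Submodule.finrank_map_mkQ_add_finrank (Submodule.span_mono (hMN C hC))
      have := hN C hC
      rw [coe_map, Submodule.span_image]
      omega
  have := (Submodule.span ℝ (M : Set E)).finrank_quotient_add_finrank
  rw [finrank_top] at hcard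
  omega

theorem katchalski_dimension_general (d k : ℕ)
    (𝒞 : Finset (Set (EuclideanSpace ℝ (Fin d))))
    (hconv : ∀ C ∈ 𝒞, Convex ℝ C)
    (H : ∀ 𝒞' ⊆ 𝒞, 𝒞'.card ≤ max (d + 1) (2 * (d - k + 1)) →
      (⋂₀ (𝒞' : Set (Set (EuclideanSpace ℝ (Fin d))))).Nonempty ∧
        k ≤ Module.finrank ℝ
          (affineSpan ℝ (⋂₀ (𝒞' : Set (Set (EuclideanSpace ℝ (Fin d)))))).direction) :
    (⋂₀ (𝒞 : Set (Set (EuclideanSpace ℝ (Fin d))))).Nonempty ∧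
      k ≤ Module.finrank ℝ
        (affineSpan ℝ (⋂₀ (𝒞 : Set (Set (EuclideanSpace ℝ (Fin d)))))).direction := by
  induction 𝒞 using Finset.strongInduction with
  | H 𝒞 IH =>
  by_cases hsmall : 𝒞.card ≤ max (d + 1) (2 * (d - k + 1))
  · exact H 𝒞 subset_rfl hsmall
  have hd : finrank ℝ (EuclideanSpace ℝ (Fin d)) = d := finrank_euclideanSpace_fin
  obtain ⟨p, hp⟩ := Convex.helly_theorem_set' hconv fun G hG hGcard =>
    (H G hG (le_max_of_le_left (by rwa [hd] at hGcard))).1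
  refine ⟨⟨p, hp⟩, ?_⟩
  rw [direction_affineSpan]
  by_contra! hlt
  have := card_le_of_finrank_vectorSpan_sInter_lt hconv hp hlt fun C hC => by
    have := (IH (𝒞.erase C) (Finset.erase_ssubset hC)
      (fun C' hC' => hconv C' (Finset.mem_of_mem_erase hC'))
      (fun 𝒞' h𝒞' => H 𝒞' (h𝒞'.trans (Finset.erase_subset C 𝒞)))).2
    rwa [direction_affineSpan] at this
  omega

/-- Katchalski's dimension Helly theorem: if every subfamily of size at most
`m(k,d) = max {d+1, 2(d-k+1)}` has an intersection of dimension at least `k`,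
then so does the whole intersection. (The dimension of a nonempty set is the
dimension of its affine hull.) -/
theorem katchalski_dimension (d k : ℕ) (hkd : k ≤ d)
    (𝒞 : Finset (Set (EuclideanSpace ℝ (Fin d))))
    (hconv : ∀ C ∈ 𝒞, Convex ℝ C)
    (H : ∀ 𝒞' ⊆ 𝒞, 𝒞'.card ≤ max (d + 1) (2 * (d - k + 1)) →
      (⋂₀ (𝒞' : Set (Set (EuclideanSpace ℝ (Fin d))))).Nonempty ∧
        k ≤ Module.finrank ℝ
          (affineSpan ℝ (⋂₀ (𝒞' : Set (Set (EuclideanSpace ℝ (Fin d)))))).direction) :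
    (⋂₀ (𝒞 : Set (Set (EuclideanSpace ℝ (Fin d))))).Nonempty ∧
      k ≤ Module.finrank ℝ
        (affineSpan ℝ (⋂₀ (𝒞 : Set (Set (EuclideanSpace ℝ (Fin d)))))).direction :=
  katchalski_dimension_general d k 𝒞 hconv H
end

section
/- A convex set C ⊆ ℝ^d contains a translate of a cone K (with apex 0) if and only if the closure of C contains a translate of K. -/
lemma posHull_zero_mem {d : ℕ} (V : Set (EuclideanSpace ℝ (Fin d))) : 0 ∈ posHull V :=
  ⟨∅, fun _ => 0, by simp, by simp, by simp⟩

lemma posHull_smul_mem {d : ℕ} {V : Set (EuclideanSpace ℝ (Fin d))} {a : ℝ} (ha : 0 ≤ a)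
    {x : EuclideanSpace ℝ (Fin d)} (hx : x ∈ posHull V) : a • x ∈ posHull V := by
  obtain ⟨s, c, hs, hc, rfl⟩ := hx
  refine ⟨s, fun v => a * c v, hs, fun v hv => mul_nonneg ha (hc v hv), ?_⟩
  rw [Finset.smul_sum]
  exact Finset.sum_congr rfl fun v _ => by rw [smul_smul]

/-- If `u + K ⊆ closure C` for a cone `K` and convex `C`, then `c + K ⊆ closure C`
for every `c ∈ closure C`. -/
lemma add_cone_mem_closure {d : ℕ} {C : Set (EuclideanSpace ℝ (Fin d))} (hC : Convex ℝ C)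
    {V : Set (EuclideanSpace ℝ (Fin d))} {u : EuclideanSpace ℝ (Fin d)}
    (hu : ∀ x ∈ posHull V, u + x ∈ closure C) {c : EuclideanSpace ℝ (Fin d)}
    (hc : c ∈ closure C) {x : EuclideanSpace ℝ (Fin d)} (hx : x ∈ posHull V) :
    c + x ∈ closure C := by
  have hcl := hC.closure
  have key : ∀ t ∈ Set.Ioc (0:ℝ) 1, (1 - t) • c + t • u + x ∈ closure C := by
    intro t ht
    have h1 : (0:ℝ) < t := ht.1
    have hmem := hcl hc (hu (t⁻¹ • x) (posHull_smul_mem (by positivity) hx))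
      (by linarith [ht.2] : (0:ℝ) ≤ 1 - t) h1.le (by ring)
    have e : t • (u + t⁻¹ • x) = t • u + x := by
      rw [smul_add, smul_smul, mul_inv_cancel₀ h1.ne', one_smul]
    rwa [e, ← add_assoc] at hmem
  haveI : (nhdsWithin (0:ℝ) (Set.Ioc (0:ℝ) 1)).NeBot := by
    refine mem_closure_iff_nhdsWithin_neBot.1 ?_
    rw [closure_Ioc (by norm_num : (0:ℝ) ≠ 1)]
    exact Set.left_mem_Icc.2 (by norm_num)
  have hcont : Continuous fun t : ℝ => (1 - t) • c + t • u + x := by fun_prop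
  have htend : Filter.Tendsto (fun t : ℝ => (1 - t) • c + t • u + x)
      (nhdsWithin (0:ℝ) (Set.Ioc (0:ℝ) 1)) (nhds (c + x)) := by
    have h := (hcont.tendsto 0).mono_left (nhdsWithin_le_nhds (s := Set.Ioc (0:ℝ) 1))
    simpa using h
  exact isClosed_closure.mem_of_tendsto htend
    (Filter.eventually_of_mem self_mem_nhdsWithin key)

lemma aux_cone {d : ℕ} {C : Set (EuclideanSpace ℝ (Fin d))} (hC : Convex ℝ C)
    (h0 : (0 : EuclideanSpace ℝ (Fin d)) ∈ C) {V : Set (EuclideanSpace ℝ (Fin d))}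
    {u : EuclideanSpace ℝ (Fin d)} (hu : ∀ x ∈ posHull V, u + x ∈ closure C) :
    ∃ u', ∀ x ∈ posHull V, u' + x ∈ C := by
  set W := Submodule.span ℝ C with hW
  have hWclosed : IsClosed (W : Set (EuclideanSpace ℝ (Fin d))) :=
    Submodule.closed_of_finiteDimensional W
  have hCW : C ⊆ W := Submodule.subset_span
  have hclW : closure C ⊆ W := closure_minimal hCW hWclosed
  have hKW : ∀ x ∈ posHull V, x ∈ W := by
    intro x hx
    have h1 : u + x ∈ W := hclW (hu x hx)
    have h2 : u ∈ W := hclW (by simpa using hu 0 (posHull_zero_mem V))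
    simpa using W.sub_mem h1 h2
  set C' : Set W := (↑) ⁻¹' C with hC'
  have hC'conv : Convex ℝ C' := hC.linear_preimage W.subtype
  have h0' : (0 : W) ∈ C' := by simpa [hC'] using h0
  have himg : ((↑) : W → EuclideanSpace ℝ (Fin d)) '' C' = C := by
    rw [hC', Set.image_preimage_eq_inter_range, Subtype.range_val]
    exact Set.inter_eq_left.2 hCW
  have hspan0 : Submodule.span ℝ C' = ⊤ := by
    apply Submodule.map_injective_of_injective W.injective_subtype
    rw [Submodule.map_span, Submodule.map_top, Submodule.range_subtype]
    rw [show W.subtype '' C' = C from himg, hW]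
  have hspan : affineSpan ℝ C' = ⊤ := by
    rw [AffineSubspace.affineSpan_eq_top_iff_vectorSpan_eq_top_of_nonempty ℝ W W ⟨0, h0'⟩]
    refine eq_top_iff.2 ?_
    rw [← hspan0]
    refine Submodule.span_le.2 fun z hz => ?_
    simpa using vsub_mem_vectorSpan ℝ hz h0'
  obtain ⟨p, hp⟩ := hC'conv.interior_nonempty_iff_affineSpan_eq_top.2 hspan
  refine ⟨(p : EuclideanSpace ℝ (Fin d)), fun x hx => ?_⟩
  have hxW := hKW x hx
  have hp' : p ∈ C' := interior_subset hp
  have hpC : (p : EuclideanSpace ℝ (Fin d)) ∈ closure C := subset_closure (s := C) hp'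
  have h2x : (p : EuclideanSpace ℝ (Fin d)) + (2:ℝ) • x ∈ closure C :=
    add_cone_mem_closure hC hu hpC (posHull_smul_mem (by norm_num) hx)
  set y : W := ⟨(p : EuclideanSpace ℝ (Fin d)) + (2:ℝ) • x,
    W.add_mem p.2 (W.smul_mem 2 hxW)⟩ with hy_def
  have hy : y ∈ closure C' := by
    rw [closure_subtype, himg]
    exact h2x
  have hmem := hC'conv.combo_interior_closure_mem_interior hp hy
    (by norm_num : (0:ℝ) < 1/2) (by norm_num : (0:ℝ) ≤ 1/2) (by norm_num)
  have heq : (1/2 : ℝ) • p + (1/2 : ℝ) • y = p + ⟨x, hxW⟩ := by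
    apply Subtype.ext
    show (1/2 : ℝ) • (p : EuclideanSpace ℝ (Fin d)) +
      (1/2 : ℝ) • ((p : EuclideanSpace ℝ (Fin d)) + (2:ℝ) • x)
      = (p : EuclideanSpace ℝ (Fin d)) + x
    module
  rw [heq] at hmem
  have hfin : (p + ⟨x, hxW⟩ : W) ∈ C' := interior_subset hmem
  simpa [hC'] using hfin

/-- A convex set contains a translate of a cone `K` (with apex `0`) iff its closure does. -/
theorem contains_cone_iff_closure (d : ℕ) (C : Set (EuclideanSpace ℝ (Fin d)))
    (hC : Convex ℝ C) (K : Set (EuclideanSpace ℝ (Fin d))) (hK : ∃ V, K = posHull V) :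
    (∃ u, (fun x => u + x) '' K ⊆ C) ↔ (∃ u, (fun x => u + x) '' K ⊆ closure C) := by
  obtain ⟨V, rfl⟩ := hK
  constructor
  · rintro ⟨u, hu⟩
    exact ⟨u, hu.trans subset_closure⟩
  · rintro ⟨u, hu⟩
    have hu' : ∀ x ∈ posHull V, u + x ∈ closure C := fun x hx => hu ⟨x, hx, rfl⟩
    have hCne : C.Nonempty := by
      rw [← closure_nonempty_iff]
      exact ⟨u, by simpa using hu' 0 (posHull_zero_mem V)⟩
    obtain ⟨c₀, hc₀⟩ := hCne
    set D := (fun z => -c₀ + z) '' C with hD_def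
    have hD : Convex ℝ D := hC.translate (-c₀)
    have h0D : (0 : EuclideanSpace ℝ (Fin d)) ∈ D := ⟨c₀, hc₀, by simp⟩
    have hclD : closure D = (fun z => -c₀ + z) '' closure C :=
      ((Homeomorph.addLeft (-c₀)).image_closure C).symm
    have huD : ∀ x ∈ posHull V, (-c₀ + u) + x ∈ closure D := by
      intro x hx
      rw [hclD]
      exact ⟨u + x, hu' x hx, (add_assoc _ _ _).symm⟩
    obtain ⟨u', hu'2⟩ := aux_cone hD h0D huD
    refine ⟨c₀ + u', ?_⟩
    rintro _ ⟨x, hx, rfl⟩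
    show c₀ + u' + x ∈ C
    obtain ⟨y, hyC, hy⟩ := hu'2 x hx
    have hy' : y = c₀ + (u' + x) := by
      have : -c₀ + y = u' + x := hy
      rw [← this]; abel
    rw [add_assoc, ← hy']
    exact hyC
end

section
/- Let e_1,…,e_d be the standard basis of ℝ^d, k ∈ [d], and let ℋ_k consist of the 2(d−k+1) halfspaces H_i^+ = {x : e_i·x ≥ 0} and H_i^− = {x : e_i·x ≤ 0} for i ≤ d−k+1. Then ⋂ℋ_k is the (k−1)-dimensional subspace {x : x_1 = ⋯ = x_{d−k+1} = 0}, hence contains no k-dimensional cone, yet for every i ≤ d−k+1 both ⋂(ℋ_k \ {H_i^+}) and ⋂(ℋ_k \ {H_i^−}) contain a k-dimensional cone. -/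
open scoped RealInnerProductSpace

/-! The halfspaces meet in the coordinate subspace `L = {x | x j = 0 for j < d - k + 1}`, of
dimension `k - 1`. A translate `u + pos V` inside `L` contains `u` and every `u + v`, so `V ⊆ L`
and `V` spans at most `k - 1` dimensions. Dropping `H_i^∓` leaves a set containing the cone
generated by `L ∪ {±e_i}`, whose span `L + ℝ e_i` has dimension `k`. -/

open Module Submodule Finset

namespace CoordinateExample

variable {d : ℕ}

section posHull

variable {V : Set (EuclideanSpace ℝ (Fin d))}

lemma zero_mem_posHull : (0 : EuclideanSpace ℝ (Fin d)) ∈ posHull V :=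
  ⟨∅, 0, by simp, by simp, by simp⟩

lemma subset_posHull : V ⊆ posHull V := fun v hv =>
  ⟨{v}, fun _ => 1, by simpa, fun _ _ => zero_le_one, by simp⟩

lemma posHull_subset_span : posHull V ⊆ span ℝ V := by
  rintro x ⟨s, c, hs, -, rfl⟩
  exact sum_mem fun v hv => smul_mem _ _ (subset_span (hs hv))

lemma posHull_subset_setOf_nonneg (f : EuclideanSpace ℝ (Fin d) →ₗ[ℝ] ℝ)
    (hV : ∀ v ∈ V, 0 ≤ f v) : posHull V ⊆ {x | 0 ≤ f x} := by
  rintro x ⟨s, c, hs, hc, rfl⟩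
  simp only [Set.mem_ofPred_eq, map_sum, map_smul, smul_eq_mul]
  exact sum_nonneg fun v hv => mul_nonneg (hc v hv) (hV v (hs hv))

lemma span_le_of_image_add_posHull_subset {u : EuclideanSpace ℝ (Fin d)}
    {L : Submodule ℝ (EuclideanSpace ℝ (Fin d))} (h : (fun x => u + x) '' posHull V ⊆ L) :
    span ℝ V ≤ L := by
  have hu : u ∈ L := by simpa using h ⟨0, zero_mem_posHull, rfl⟩
  refine span_le.mpr fun v hv => ?_
  simpa using L.sub_mem (h ⟨v, subset_posHull hv, rfl⟩) hu

end posHull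

section vanishingOn

noncomputable def vanishingOn (s : Finset (Fin d)) : Submodule ℝ (EuclideanSpace ℝ (Fin d)) :=
  span ℝ (PiLp.basisFun 2 ℝ (Fin d) '' ↑sᶜ)

variable {s : Finset (Fin d)}

lemma mem_vanishingOn {x : EuclideanSpace ℝ (Fin d)} :
    x ∈ vanishingOn s ↔ ∀ j ∈ s, x j = 0 := by
  rw [vanishingOn, Basis.mem_span_image]
  simp only [Set.subset_def, mem_coe, Finsupp.mem_support_iff, PiLp.basisFun_repr, coe_compl,
    Set.mem_compl_iff]
  exact forall_congr' fun j => not_imp_not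

lemma finrank_vanishingOn : finrank ℝ (vanishingOn s) = d - #s := by
  have hli := (PiLp.basisFun 2 ℝ (Fin d)).linearIndependent.comp _
    (Subtype.val_injective (p := (· ∈ sᶜ)))
  rw [vanishingOn, Set.image_eq_range]
  exact (finrank_span_eq_card hli).trans (by simp)

lemma span_insert_vanishingOn (i : Fin d) {σ : ℝ} (hσ : σ ≠ 0) :
    span ℝ (insert (σ • EuclideanSpace.single i 1)
      (vanishingOn s : Set (EuclideanSpace ℝ (Fin d)))) = vanishingOn (s.erase i) := by
  rw [span_insert, span_eq, span_singleton_smul_eq hσ.isUnit, vanishingOn, vanishingOn,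
    compl_erase, coe_insert, Set.image_insert_eq, span_insert, PiLp.basisFun_apply]

lemma posHull_insert_vanishingOn_subset {i : Fin d} (hi : i ∈ s) {σ : ℝ} (hσ : σ ≠ 0) :
    posHull (insert (σ • EuclideanSpace.single i 1)
      (vanishingOn s : Set (EuclideanSpace ℝ (Fin d)))) ⊆
      {x | 0 ≤ σ * x i} ∩ vanishingOn (s.erase i) := by
  refine Set.subset_inter ?_ ?_
  · refine posHull_subset_setOf_nonneg (σ • (PiLp.basisFun 2 ℝ (Fin d)).coord i) ?_
    rintro v (rfl | hv)
    · simpa using mul_self_nonneg σ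
    · simp [mem_vanishingOn.mp hv i hi]
  · rw [← span_insert_vanishingOn i hσ]
    exact posHull_subset_span

end vanishingOn

end CoordinateExample

open CoordinateExample in
/-- Example 2: the `2(d-k+1)` coordinate halfspaces `{x : xᵢ ≥ 0}` and `{x : xᵢ ≤ 0}`,
`i ≤ d-k+1`, intersect in a `(k-1)`-dimensional subspace containing no `k`-dimensional
cone, yet dropping any one of them leaves an intersection containing a `k`-dimensional
cone. -/
theorem coordinate_example (d k : ℕ) (hk1 : 1 ≤ k) (hkd : k ≤ d) :
    (⋂ i : Fin d, ⋂ (_ : (i : ℕ) < d - k + 1),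
        ({x : EuclideanSpace ℝ (Fin d) | 0 ≤ x i} ∩ {x | x i ≤ 0})) =
      {x : EuclideanSpace ℝ (Fin d) | ∀ i : Fin d, (i : ℕ) < d - k + 1 → x i = 0} ∧
    (¬ ∃ (u : EuclideanSpace ℝ (Fin d)) (V : Set (EuclideanSpace ℝ (Fin d))),
        Module.finrank ℝ (Submodule.span ℝ V) = k ∧
          (fun x => u + x) '' posHull V ⊆
            {x : EuclideanSpace ℝ (Fin d) | ∀ i : Fin d, (i : ℕ) < d - k + 1 → x i = 0}) ∧
    (∀ i : Fin d, (i : ℕ) < d - k + 1 →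
      (∃ V : Set (EuclideanSpace ℝ (Fin d)),
          Module.finrank ℝ (Submodule.span ℝ V) = k ∧
            posHull V ⊆ {x | x i ≤ 0} ∩
              ⋂ j : Fin d, ⋂ (_ : (j : ℕ) < d - k + 1) (_ : j ≠ i),
                ({x : EuclideanSpace ℝ (Fin d) | 0 ≤ x j} ∩ {x | x j ≤ 0})) ∧
      (∃ V : Set (EuclideanSpace ℝ (Fin d)),
          Module.finrank ℝ (Submodule.span ℝ V) = k ∧
            posHull V ⊆ {x | 0 ≤ x i} ∩
              ⋂ j : Fin d, ⋂ (_ : (j : ℕ) < d - k + 1) (_ : j ≠ i),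
                ({x : EuclideanSpace ℝ (Fin d) | 0 ≤ x j} ∩ {x | x j ≤ 0}))) := by
  set s : Finset (Fin d) := {j | (j : ℕ) < d - k + 1}
  have hs : #s = d - k + 1 := by rw [Fin.card_filter_val_lt]; omega
  have hL : {x : EuclideanSpace ℝ (Fin d) | ∀ i : Fin d, (i : ℕ) < d - k + 1 → x i = 0} =
      vanishingOn s := by
    ext x; simp [mem_vanishingOn, s]
  refine ⟨?_, ?_, fun i hi => ?_⟩
  · ext x; simp [le_antisymm_iff, and_comm]
  · rintro ⟨u, V, hV, hsub⟩
    have := finrank_mono (span_le_of_image_add_posHull_subset (hL ▸ hsub))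
    rw [hV, finrank_vanishingOn, hs] at this
    omega
  have hi' : i ∈ s := by simpa [s] using hi
  have hcone (σ : ℝ) (hσ : σ ≠ 0) : ∃ V : Set (EuclideanSpace ℝ (Fin d)),
      finrank ℝ (span ℝ V) = k ∧
        posHull V ⊆ {x | 0 ≤ σ * x i} ∩ vanishingOn (s.erase i) := by
    refine ⟨_, ?_, posHull_insert_vanishingOn_subset hi' hσ⟩
    rw [span_insert_vanishingOn i hσ, finrank_vanishingOn, card_erase_of_mem hi', hs]
    omega
  obtain ⟨Vneg, hVneg, hneg⟩ := hcone (-1) (by norm_num)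
  obtain ⟨Vpos, hVpos, hpos⟩ := hcone 1 one_ne_zero
  refine ⟨⟨Vneg, hVneg, hneg.trans ?_⟩, ⟨Vpos, hVpos, hpos.trans ?_⟩⟩ <;>
  · rintro x ⟨hxi, hx⟩
    simp_all [mem_vanishingOn, s]
end

section
/- Let v_1,…,v_{d+1} ∈ ℝ^d satisfy Σ v_i = 0 with every d of them linearly independent, and let A = {v_1,…,v_{d+1}}. Then the lineality space of pos A is all of ℝ^d, while for every proper subset B ⊊ A the lineality space of pos B is {0}. -/
open scoped RealInnerProductSpace

lemma mem_posHull_range (d : ℕ) (v : Fin (d + 1) → EuclideanSpace ℝ (Fin d))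
    (hsum : ∑ i, v i = 0)
    (hind : ∀ j : Fin (d + 1), LinearIndependent ℝ (fun i : {i // i ≠ j} => v i))
    (x : EuclideanSpace ℝ (Fin d)) : x ∈ posHull (Set.range v) := by
  classical
  set j : Fin (d+1) := 0 with hj
  -- span is top
  have hcard : Fintype.card {i : Fin (d+1) // i ≠ j} = d := by
    simp [Fintype.card_subtype_compl, Fintype.card_subtype_eq]
  have hspan : Submodule.span ℝ (Set.range (fun i : {i : Fin (d+1) // i ≠ j} => v i)) = ⊤ :=
    Submodule.eq_top_of_finrank_eq (by
      rw [finrank_span_eq_card (hind j), hcard, finrank_euclideanSpace_fin])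
  have hx : ∃ a : {i : Fin (d+1) // i ≠ j} → ℝ, ∑ i, a i • v i = x := by
    rw [← Submodule.mem_span_range_iff_exists_fun ℝ, hspan]; trivial
  obtain ⟨a, ha⟩ := hx
  set b : Fin (d+1) → ℝ := fun i => if h : i ≠ j then a ⟨i, h⟩ else 0 with hbdef
  have hb : ∑ i, b i • v i = x := by
    rw [← Finset.sum_erase Finset.univ (a := j) (f := fun i => b i • v i) (by simp [hbdef]),
      Finset.sum_subtype (Finset.univ.erase j) (p := fun i => i ≠ j) (by simp)
        (fun i => b i • v i)]
    rw [← ha]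
    apply Finset.sum_congr rfl
    intro i _
    simp [hbdef, i.2]
  set t : ℝ := ∑ i, |b i| with htdef
  have ht : ∀ i, 0 ≤ b i + t := by
    intro i
    have h1 : |b i| ≤ t := htdef ▸ Finset.single_le_sum (f := fun k => |b k|)
      (fun k _ => abs_nonneg _) (Finset.mem_univ i)
    nlinarith [neg_abs_le (b i)]
  have hx2 : ∑ i, (b i + t) • v i = x := by
    have : ∑ i, (b i + t) • v i = ∑ i, b i • v i + t • ∑ i, v i := by
      rw [Finset.smul_sum]
      rw [← Finset.sum_add_distrib]
      apply Finset.sum_congr rfl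
      intro i _
      rw [add_smul]
    rw [this, hb, hsum, smul_zero, add_zero]
  refine ⟨Finset.image v Finset.univ,
    fun w => ∑ i ∈ Finset.univ.filter (fun i => v i = w), (b i + t), ?_, ?_, ?_⟩
  · intro w hw
    simp only [Finset.coe_image, Set.mem_image] at hw
    obtain ⟨i, _, rfl⟩ := hw
    exact Set.mem_range_self i
  · intro w _
    exact Finset.sum_nonneg fun i _ => ht i
  · rw [← hx2]
    rw [Finset.sum_image' (fun i => (b i + t) • v i)]
    intro i _
    rw [Finset.sum_smul]
    apply Finset.sum_congr rfl
    intro k hk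
    rw [(Finset.mem_filter.mp hk).2]

lemma eq_zero_of_mem_posHull (d : ℕ) (v : Fin (d + 1) → EuclideanSpace ℝ (Fin d))
    (j : Fin (d + 1)) (hind : LinearIndependent ℝ (fun i : {i // i ≠ j} => v i))
    (B : Set (EuclideanSpace ℝ (Fin d))) (hB : B ⊆ Set.range v) (hj : v j ∉ B)
    (x : EuclideanSpace ℝ (Fin d)) (hx : x ∈ posHull B) (hx' : -x ∈ posHull B) : x = 0 := by
  classical
  obtain ⟨s, c, hs, hc, hxs⟩ := hx
  obtain ⟨t, c', ht, hc', hxt⟩ := hx'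
  set f : EuclideanSpace ℝ (Fin d) → ℝ :=
    fun w => (if w ∈ s then c w else 0) + (if w ∈ t then c' w else 0) with hfdef
  have key : ∑ w ∈ s ∪ t, f w • w = 0 := by
    have h1 : ∑ w ∈ s ∪ t, (if w ∈ s then c w else 0) • w = ∑ w ∈ s, c w • w := by
      rw [← Finset.sum_subset Finset.subset_union_left (fun w _ hw => by simp [hw])]
      exact Finset.sum_congr rfl (fun w hw => by simp [hw])
    have h2 : ∑ w ∈ s ∪ t, (if w ∈ t then c' w else 0) • w = ∑ w ∈ t, c' w • w := by
      rw [← Finset.sum_subset Finset.subset_union_right (fun w _ hw => by simp [hw])]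
      exact Finset.sum_congr rfl (fun w hw => by simp [hw])
    have h3 : ∑ w ∈ s ∪ t, f w • w
        = ∑ w ∈ s ∪ t, ((if w ∈ s then c w else 0) • w + (if w ∈ t then c' w else 0) • w) := by
      exact Finset.sum_congr rfl (fun w _ => add_smul _ _ _)
    rw [h3, Finset.sum_add_distrib, h1, h2, ← hxs, ← hxt, add_neg_cancel]
  have hmem : ∀ w ∈ s ∪ t, ∃ i : {i // i ≠ j}, v i = w := by
    intro w hw
    have hwB : w ∈ B := by
      rcases Finset.mem_union.mp hw with h | h
      · exact hs h
      · exact ht h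
    obtain ⟨i, hi⟩ := hB hwB
    have hne : i ≠ j := by rintro rfl; exact hj (hi ▸ hwB)
    exact ⟨⟨i, hne⟩, hi⟩
  set T : Finset {i : Fin (d+1) // i ≠ j} :=
    Finset.univ.filter (fun i => v i ∈ s ∪ t) with hTdef
  have himg : Finset.image (fun i : {i // i ≠ j} => v i) T = s ∪ t := by
    ext w
    simp only [Finset.mem_image, hTdef, Finset.mem_filter, Finset.mem_univ, true_and]
    constructor
    · rintro ⟨i, hi, rfl⟩; exact hi
    · intro hw; obtain ⟨i, hi⟩ := hmem w hw; exact ⟨i, hi ▸ hw, hi⟩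
  have hzero : ∀ i : {i : Fin (d+1) // i ≠ j}, f (v i) = 0 := by
    intro i
    refine linearIndependent_iff'.mp hind Finset.univ (fun i => f (v i)) ?_ i (Finset.mem_univ i)
    rw [← Finset.sum_subset (Finset.subset_univ T) (fun i _ hi => ?_)]
    · rw [← Finset.sum_image (g := fun i : {i // i ≠ j} => v i) (f := fun w => f w • w)
        (fun a _ b _ hab => hind.injective hab), himg, key]
    · have : v i ∉ s ∪ t := by
        intro h
        exact hi (by rw [hTdef, Finset.mem_filter]; exact ⟨Finset.mem_univ _, h⟩)
      have h1 : v i ∉ s := fun h => this (Finset.mem_union_left _ h)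
      have h2 : v i ∉ t := fun h => this (Finset.mem_union_right _ h)
      simp [hfdef, h1, h2]
  rw [hxs]
  apply Finset.sum_eq_zero
  intro w hw
  obtain ⟨i, hi⟩ := hmem w (Finset.mem_union_left _ hw)
  have hf0 : f w = 0 := hi ▸ hzero i
  have hcw : 0 ≤ c w := hc w hw
  have hother : 0 ≤ if w ∈ t then c' w else 0 := by
    split
    · exact hc' w ‹_›
    · exact le_refl 0
  have h2 : c w + (if w ∈ t then c' w else 0) = 0 := by simpa [hfdef, hw] using hf0
  have hcz : c w = 0 := by linarith
  rw [hcz, zero_smul]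

lemma zero_mem_posHull {d : ℕ} (B : Set (EuclideanSpace ℝ (Fin d))) : 0 ∈ posHull B :=
  ⟨∅, fun _ => 0, by simp, fun _ h => by simp at h, by simp⟩

/-- Example for the lineality-space Helly theorem: `d+1` vectors summing to `0` with any
`d` of them linearly independent have lineality space `ℝ^d`, while every proper subset
has lineality space `{0}`. -/
theorem simplex_lineality_example (d : ℕ) (v : Fin (d + 1) → EuclideanSpace ℝ (Fin d))
    (hsum : ∑ i, v i = 0)
    (hind : ∀ j : Fin (d + 1), LinearIndependent ℝ (fun i : {i // i ≠ j} => v i)) :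
    linealitySet (Set.range v) = Set.univ ∧
      ∀ B : Set (EuclideanSpace ℝ (Fin d)), B ⊆ Set.range v → B ≠ Set.range v →
        linealitySet B = {0} := by
  constructor
  · ext x
    simp only [Set.mem_univ, iff_true, linealitySet, Set.mem_inter_iff, Set.mem_neg]
    exact ⟨mem_posHull_range d v hsum hind x, mem_posHull_range d v hsum hind (-x)⟩
  · intro B hB hBne
    have hj : ∃ j, v j ∉ B := by
      by_contra h
      push_neg at h
      exact hBne (Set.Subset.antisymm hB (by rintro _ ⟨i, rfl⟩; exact h i))
    obtain ⟨j, hj⟩ := hj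
    ext x
    simp only [Set.mem_singleton_iff, linealitySet, Set.mem_inter_iff, Set.mem_neg]
    constructor
    · rintro ⟨h1, h2⟩
      exact eq_zero_of_mem_posHull d v j (hind j) B hB hj x h1 h2
    · rintro rfl
      exact ⟨zero_mem_posHull B, by rw [neg_zero]; exact zero_mem_posHull B⟩
end

section
/- Let A_k = {e_1, −e_1, …, e_k, −e_k} ⊆ ℝ^d where e_1,…,e_d is the standard basis and 1 ≤ k ≤ d. Then dim lpos A_k = k, but for every a ∈ A_k, dim lpos(A_k \ {a}) < k. -/
open scoped RealInnerProductSpace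

/-!
`A_k` is symmetric, so `A_k ⊆ lpos A_k` and the lineality space is `span A_k = span {e₁, …, e_k}`.
For `a ∈ A_k`, every other element of `A_k` is either `-a` or orthogonal to `a`, so the functional
`⟪a, ·⟫` is nonpositive on `A_k \ {a}`; hence it vanishes on `lpos (A_k \ {a})`, while it does not
vanish at `-a ∈ A_k \ {a}`. So `lpos (A_k \ {a})` lies in a proper subspace of `span (A_k \ {a})`.
-/

section

variable {d : ℕ} {V : Set (EuclideanSpace ℝ (Fin d))}

lemma subset_posHull : V ⊆ posHull V := fun v hv =>
  ⟨{v}, fun _ => 1, by simpa using hv, fun _ _ => zero_le_one, by simp⟩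

lemma posHull_subset_span : posHull V ⊆ Submodule.span ℝ V := by
  rintro x ⟨s, c, hs, -, rfl⟩
  exact Submodule.sum_mem _ fun v hv => Submodule.smul_mem _ _ (Submodule.subset_span (hs hv))

lemma span_linealitySet_le_span : Submodule.span ℝ (linealitySet V) ≤ Submodule.span ℝ V :=
  Submodule.span_le.2 fun _ hx => posHull_subset_span hx.1

lemma span_linealitySet_of_neg_subset (hV : -V ⊆ V) :
    Submodule.span ℝ (linealitySet V) = Submodule.span ℝ V :=
  span_linealitySet_le_span.antisymm <| Submodule.span_mono fun v hv =>
    ⟨subset_posHull hv, subset_posHull (hV (by simpa using hv))⟩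

lemma map_nonpos_of_mem_posHull {f : EuclideanSpace ℝ (Fin d) →ₗ[ℝ] ℝ} (hf : ∀ v ∈ V, f v ≤ 0)
    {x : EuclideanSpace ℝ (Fin d)} (hx : x ∈ posHull V) : f x ≤ 0 := by
  obtain ⟨s, c, hs, hc, rfl⟩ := hx
  rw [map_sum]
  exact Finset.sum_nonpos fun v hv => by
    rw [map_smul, smul_eq_mul]
    exact mul_nonpos_of_nonneg_of_nonpos (hc v hv) (hf v (hs hv))

lemma linealitySet_subset_ker {f : EuclideanSpace ℝ (Fin d) →ₗ[ℝ] ℝ} (hf : ∀ v ∈ V, f v ≤ 0) :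
    linealitySet V ⊆ LinearMap.ker f := by
  rintro x ⟨hx, hx'⟩
  have hneg : f (-x) ≤ 0 := map_nonpos_of_mem_posHull hf hx'
  rw [map_neg] at hneg
  exact le_antisymm (map_nonpos_of_mem_posHull hf hx) (neg_nonpos.1 hneg)

lemma finrank_span_linealitySet_lt {f : EuclideanSpace ℝ (Fin d) →ₗ[ℝ] ℝ}
    (hf : ∀ v ∈ V, f v ≤ 0) {w : EuclideanSpace ℝ (Fin d)} (hw : w ∈ V) (hfw : f w ≠ 0) :
    Module.finrank ℝ (Submodule.span ℝ (linealitySet V)) <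
      Module.finrank ℝ (Submodule.span ℝ V) := by
  have hle : Submodule.span ℝ (linealitySet V) ≤ Submodule.span ℝ V ⊓ LinearMap.ker f :=
    le_inf span_linealitySet_le_span (Submodule.span_le.2 (linealitySet_subset_ker hf))
  have hlt : Submodule.span ℝ V ⊓ LinearMap.ker f < Submodule.span ℝ V :=
    inf_lt_left.2 fun h => hfw (h (Submodule.subset_span hw))
  exact (Submodule.finrank_mono hle).trans_lt (Submodule.finrank_lt_finrank_of_lt hlt)

open EuclideanSpace

def plusMinusBasis (d k : ℕ) : Set (EuclideanSpace ℝ (Fin d)) :=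
  {x | ∃ i : Fin d, (i : ℕ) < k ∧ (x = single i (1 : ℝ) ∨ x = -single i (1 : ℝ))}

variable {k : ℕ}

lemma neg_plusMinusBasis_subset : -plusMinusBasis d k ⊆ plusMinusBasis d k := by
  rintro x ⟨i, hi, hx | hx⟩
  · exact ⟨i, hi, Or.inr (neg_eq_iff_eq_neg.1 hx)⟩
  · exact ⟨i, hi, Or.inl (neg_eq_iff_eq_neg.1 hx |>.trans (neg_neg _))⟩

lemma inner_nonpos_of_mem_plusMinusBasis {a v : EuclideanSpace ℝ (Fin d)}
    (ha : a ∈ plusMinusBasis d k) (hv : v ∈ plusMinusBasis d k) (hva : v ≠ a) : ⟪a, v⟫ ≤ 0 := by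
  obtain ⟨j, -, rfl | rfl⟩ := ha <;> obtain ⟨i, -, rfl | rfl⟩ := hv <;>
    by_cases hij : i = j <;> simp_all [inner_single_left]

lemma finrank_span_plusMinusBasis (hkd : k ≤ d) :
    Module.finrank ℝ (Submodule.span ℝ (plusMinusBasis d k)) = k := by
  let e : Fin k → EuclideanSpace ℝ (Fin d) := fun i => single (Fin.castLE hkd i) 1
  have he : LinearIndependent ℝ e := by
    simpa [e, Function.comp_def] using
      (basisFun (Fin d) ℝ).toBasis.linearIndependent.comp _ (Fin.castLE_injective hkd)
  have hspan : Submodule.span ℝ (plusMinusBasis d k) = Submodule.span ℝ (Set.range e) := by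
    refine le_antisymm (Submodule.span_le.2 ?_) (Submodule.span_mono ?_)
    · rintro x ⟨i, hi, rfl | rfl⟩
      · exact Submodule.subset_span ⟨⟨i, hi⟩, rfl⟩
      · exact Submodule.neg_mem _ (Submodule.subset_span ⟨⟨i, hi⟩, rfl⟩)
    · rintro x ⟨i, rfl⟩
      exact ⟨Fin.castLE hkd i, i.isLt, Or.inl rfl⟩
  rw [hspan, finrank_span_eq_card he, Fintype.card_fin]

end

theorem plus_minus_basis_example_general (d k : ℕ) (hkd : k ≤ d) :
    Module.finrank ℝ (Submodule.span ℝ (linealitySet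
        {x : EuclideanSpace ℝ (Fin d) | ∃ i : Fin d, (i : ℕ) < k ∧
          (x = EuclideanSpace.single i (1 : ℝ) ∨ x = -EuclideanSpace.single i (1 : ℝ))})) = k ∧
      ∀ a ∈ {x : EuclideanSpace ℝ (Fin d) | ∃ i : Fin d, (i : ℕ) < k ∧
          (x = EuclideanSpace.single i (1 : ℝ) ∨ x = -EuclideanSpace.single i (1 : ℝ))},
        Module.finrank ℝ (Submodule.span ℝ (linealitySet
          ({x : EuclideanSpace ℝ (Fin d) | ∃ i : Fin d, (i : ℕ) < k ∧
            (x = EuclideanSpace.single i (1 : ℝ) ∨ x = -EuclideanSpace.single i (1 : ℝ))}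
              \ {a}))) < k := by
  change Module.finrank ℝ (Submodule.span ℝ (linealitySet (plusMinusBasis d k))) = k ∧
    ∀ a ∈ plusMinusBasis d k,
      Module.finrank ℝ (Submodule.span ℝ (linealitySet (plusMinusBasis d k \ {a}))) < k
  refine ⟨?_, fun a ha => ?_⟩
  · rw [span_linealitySet_of_neg_subset neg_plusMinusBasis_subset, finrank_span_plusMinusBasis hkd]
  have ha0 : a ≠ 0 := by
    obtain ⟨i, -, rfl | rfl⟩ := ha <;> simp
  have hneg : -a ∈ plusMinusBasis d k \ {a} :=
    ⟨neg_plusMinusBasis_subset (by simpa using ha),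
      by simpa [neg_eq_iff_add_eq_zero, ← two_smul ℝ] using ha0⟩
  calc Module.finrank ℝ (Submodule.span ℝ (linealitySet (plusMinusBasis d k \ {a})))
      < Module.finrank ℝ (Submodule.span ℝ (plusMinusBasis d k \ {a})) :=
        finrank_span_linealitySet_lt (f := innerₗ _ a)
          (fun v hv => inner_nonpos_of_mem_plusMinusBasis ha hv.1 hv.2) hneg
          (by simpa [innerₗ_apply_apply] using ha0)
    _ ≤ Module.finrank ℝ (Submodule.span ℝ (plusMinusBasis d k)) :=
        Submodule.finrank_mono (Submodule.span_mono Set.sdiff_subset)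
    _ = k := finrank_span_plusMinusBasis hkd

/-- Example: `A_k = {±e₁, …, ±e_k}` has `dim lpos A_k = k`, but removing any element
drops the dimension of the lineality space below `k`. -/
theorem plus_minus_basis_example (d k : ℕ) (hk1 : 1 ≤ k) (hkd : k ≤ d) :
    Module.finrank ℝ (Submodule.span ℝ (linealitySet
        {x : EuclideanSpace ℝ (Fin d) | ∃ i : Fin d, (i : ℕ) < k ∧
          (x = EuclideanSpace.single i (1 : ℝ) ∨ x = -EuclideanSpace.single i (1 : ℝ))})) = k ∧
      ∀ a ∈ {x : EuclideanSpace ℝ (Fin d) | ∃ i : Fin d, (i : ℕ) < k ∧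
          (x = EuclideanSpace.single i (1 : ℝ) ∨ x = -EuclideanSpace.single i (1 : ℝ))},
        Module.finrank ℝ (Submodule.span ℝ (linealitySet
          ({x : EuclideanSpace ℝ (Fin d) | ∃ i : Fin d, (i : ℕ) < k ∧
            (x = EuclideanSpace.single i (1 : ℝ) ∨ x = -EuclideanSpace.single i (1 : ℝ))}
              \ {a}))) < k :=
  plus_minus_basis_example_general d k hkd
end

section
/- Let k ∈ [d] and j ≥ 2 be integers with j − 1 ≤ k and k ≤ d. Then (jk)/(j−1) + j ≤ max{d+1, 2(k+1)}. -/
/-- Arithmetic claim: for integers `2 ≤ j`, `j - 1 ≤ k`, `1 ≤ k ≤ d`, one has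
`jk/(j-1) + j ≤ max {d+1, 2(k+1)}`. -/
theorem arithmetic_claim (d k j : ℕ) (hk1 : 1 ≤ k) (hkd : k ≤ d)
    (hj : 2 ≤ j) (hjk : j - 1 ≤ k) :
    ((j : ℝ) * k) / ((j : ℝ) - 1) + (j : ℝ) ≤
      max ((d : ℝ) + 1) (2 * ((k : ℝ) + 1)) := by
  have hjR : (2:ℝ) ≤ (j:ℝ) := by exact_mod_cast hj
  have hjkR : (j:ℝ) - 1 ≤ (k:ℝ) := by
    have h : j ≤ k + 1 := by omega
    have : (j:ℝ) ≤ (k:ℝ) + 1 := by exact_mod_cast h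
    linarith
  refine le_trans ?_ (le_max_right _ _)
  rw [div_add' _ _ _ (by linarith : (j:ℝ) - 1 ≠ 0), div_le_iff₀ (by linarith)]
  nlinarith
end

section
/- Let A be a finite set of nonzero vectors in ℝ^d and k ∈ [d]. The intersection of the halfspaces {x : a·x ≤ 0}, a ∈ A, contains a (d−k)-dimensional linear subspace for every choice of at most k+1 of these halfspaces if and only if every subset of A of size k+1 is linearly dependent, i.e., dim span A ≤ k; and in that case the intersection over all a ∈ A contains a (d−k)-dimensional linear subspace, namely (span A)^⊥. -/
open scoped RealInnerProductSpace

/-! A subspace contained in the halfspaces `⟪a, ·⟫ ≤ 0`, `a ∈ B`, is exactly a subspace of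
`(span B)ᗮ`, whose dimension is `d - dim span B`. So if `dim span A ≤ k`, `(span A)ᗮ` works for
every subfamily; if `dim span A > k`, then `A` contains `k + 1` linearly independent vectors, and
their halfspaces only contain subspaces of dimension at most `d - k - 1`. -/

open Module Submodule

section LinearIndependence

variable {K M : Type*} [DivisionRing K] [AddCommGroup M] [Module K M]

theorem Submodule.exists_finset_subset_card_eq_linearIndepOn {s : Set M}
    [Module.Finite K (span K s)] {n : ℕ} (hn : n ≤ finrank K (span K s)) :
    ∃ t : Finset M, ↑t ⊆ s ∧ t.card = n ∧ LinearIndepOn K id (t : Set M) := by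
  obtain ⟨t, hts, htcard, -, htind⟩ := exists_finset_span_eq_linearIndepOn K s
  obtain ⟨u, hut, hucard⟩ := Finset.exists_subset_card_eq (htcard ▸ hn)
  exact ⟨u, (Finset.coe_subset.2 hut).trans hts, hucard, htind.mono (Finset.coe_subset.2 hut)⟩

theorem Submodule.exists_le_finrank_eq (p : Submodule K M) [Module.Finite K p] {n : ℕ}
    (hn : n ≤ finrank K p) : ∃ q ≤ p, finrank K q = n := by
  have : Module.Finite K (span K (p : Set M)) := by rwa [span_eq]
  obtain ⟨t, htp, rfl, htind⟩ :=
    exists_finset_subset_card_eq_linearIndepOn (s := (p : Set M)) (n := n) (by rwa [span_eq])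
  exact ⟨span K t, span_le.2 htp, finrank_span_finset_eq_card htind⟩

end LinearIndependence

section Halfspaces

variable {V : Type*} [NormedAddCommGroup V] [InnerProductSpace ℝ V]

/-- A subspace lying in the halfspace `⟪a, ·⟫ ≤ 0` contains `-x` along with `x`, so it lies in
the hyperplane `⟪a, ·⟫ = 0`. -/
theorem Submodule.coe_subset_iInter_halfspaces_iff {s : Set V} {S : Submodule ℝ V} :
    (S : Set V) ⊆ ⋂ a ∈ s, {x : V | ⟪a, x⟫ ≤ 0} ↔ S ≤ (span ℝ s)ᗮ := by
  rw [← isOrtho_iff_le, isOrtho_comm, isOrtho_iff_le, span_le]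
  simp only [Set.subset_def, Set.mem_iInter, Set.mem_ofPred_eq, SetLike.mem_coe, mem_orthogonal']
  refine ⟨fun h a ha x hx => le_antisymm (h x hx a ha) ?_, fun h x hx a ha => (h a ha x hx).le⟩
  have := h (-x) (neg_mem hx) a ha
  rw [inner_neg_right] at this
  linarith

end Halfspaces

theorem deSantis_halfspace_step_general (d k : ℕ)
    (A : Finset (EuclideanSpace ℝ (Fin d))) :
    ((∀ B ⊆ A, B.card ≤ k + 1 →
        ∃ S : Submodule ℝ (EuclideanSpace ℝ (Fin d)), Module.finrank ℝ S = d - k ∧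
          (S : Set (EuclideanSpace ℝ (Fin d))) ⊆
            ⋂ a ∈ B, {x : EuclideanSpace ℝ (Fin d) | ⟪a, x⟫ ≤ 0}) ↔
      Module.finrank ℝ (Submodule.span ℝ (A : Set (EuclideanSpace ℝ (Fin d)))) ≤ k) ∧
    (Module.finrank ℝ (Submodule.span ℝ (A : Set (EuclideanSpace ℝ (Fin d)))) ≤ k →
      (((Submodule.span ℝ (A : Set (EuclideanSpace ℝ (Fin d))))ᗮ :
          Set (EuclideanSpace ℝ (Fin d))) ⊆
          (⋂ a ∈ A, {x : EuclideanSpace ℝ (Fin d) | ⟪a, x⟫ ≤ 0}) ∧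
        d - k ≤ Module.finrank ℝ
          ((Submodule.span ℝ (A : Set (EuclideanSpace ℝ (Fin d))))ᗮ))) := by
  have finrank_orthogonal (s : Set (EuclideanSpace ℝ (Fin d))) :
      finrank ℝ (span ℝ s)ᗮ = d - finrank ℝ (span ℝ s) := by
    have := (span ℝ s).finrank_add_finrank_orthogonal
    rw [finrank_euclideanSpace_fin] at this
    omega
  have hA_le : finrank ℝ (span ℝ (A : Set (EuclideanSpace ℝ (Fin d)))) ≤ d :=
    (finrank_le _).trans_eq finrank_euclideanSpace_fin
  refine ⟨⟨fun h => ?_, fun hAk B hBA _ => ?_⟩, fun hAk =>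
    ⟨coe_subset_iInter_halfspaces_iff.2 le_rfl, by rw [finrank_orthogonal]; omega⟩⟩
  · by_contra! hlt
    obtain ⟨B, hBA, hBcard, hBind⟩ := exists_finset_subset_card_eq_linearIndepOn hlt
    obtain ⟨S, hS, hSB⟩ := h B (by exact_mod_cast hBA) hBcard.le
    have hSle := finrank_mono (coe_subset_iInter_halfspaces_iff.1 hSB)
    rw [finrank_orthogonal, finrank_span_finset_eq_card hBind] at hSle
    omega
  · obtain ⟨S, hSA, hS⟩ := exists_le_finrank_eq (span ℝ (A : Set (EuclideanSpace ℝ (Fin d))))ᗮ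
      (n := d - k) (by rw [finrank_orthogonal]; omega)
    have hAB : span ℝ (B : Set (EuclideanSpace ℝ (Fin d))) ≤ span ℝ A :=
      span_mono (by exact_mod_cast hBA)
    exact ⟨S, hS, coe_subset_iInter_halfspaces_iff.2 (hSA.trans (orthogonal_le hAB))⟩

/-- Key step in the proof of de Santis's theorem for homogeneous halfspaces: every
`(k+1)`-subfamily intersection contains a `(d-k)`-dimensional subspace iff
`dim span A ≤ k`, in which case `(span A)ᗮ` is such a subspace for the whole family. -/
theorem deSantis_halfspace_step (d k : ℕ) (hk1 : 1 ≤ k) (hkd : k ≤ d)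
    (A : Finset (EuclideanSpace ℝ (Fin d))) (hA : ∀ a ∈ A, a ≠ 0) :
    ((∀ B ⊆ A, B.card ≤ k + 1 →
        ∃ S : Submodule ℝ (EuclideanSpace ℝ (Fin d)), Module.finrank ℝ S = d - k ∧
          (S : Set (EuclideanSpace ℝ (Fin d))) ⊆
            ⋂ a ∈ B, {x : EuclideanSpace ℝ (Fin d) | ⟪a, x⟫ ≤ 0}) ↔
      Module.finrank ℝ (Submodule.span ℝ (A : Set (EuclideanSpace ℝ (Fin d)))) ≤ k) ∧
    (Module.finrank ℝ (Submodule.span ℝ (A : Set (EuclideanSpace ℝ (Fin d)))) ≤ k →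
      (((Submodule.span ℝ (A : Set (EuclideanSpace ℝ (Fin d))))ᗮ :
          Set (EuclideanSpace ℝ (Fin d))) ⊆
          (⋂ a ∈ A, {x : EuclideanSpace ℝ (Fin d) | ⟪a, x⟫ ≤ 0}) ∧
        d - k ≤ Module.finrank ℝ
          ((Submodule.span ℝ (A : Set (EuclideanSpace ℝ (Fin d))))ᗮ))) :=
  deSantis_halfspace_step_general d k A
end
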